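/- arXiv:1803.04684 — 10 statements merged into one kernel-verified Lean document; each statement's English description precedes it below -/
import Mathlib

section
/- An element (α, g) of H belongs to the center of H if and only if g = 1 and α is constant on edges with the same label, i.e., α(h, a) = α(k, a) for all h, k ∈ G and all a ∈ A. -/
open Multiplicative

/-- The shift action of `g : G` on functions `(G × A) → R`:
`(g · α)(h, a) = α (g⁻¹h, a)`. -/
def cayAct {G A : Type*} (R : Type*) [Group G] [AddCommGroup R] (g : G) :
    ((G × A) → R) ≃+ ((G × A) → R) where
  toFun α := fun x => α (g⁻¹ * x.1, x.2)
  invFun α := fun x => α (g * x.1, x.2)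
  left_inv := by intro α; funext x; simp
  right_inv := by intro α; funext x; simp
  map_add' := by intro α β; rfl

/-- The action of `G` on the (multiplicatively written) additive group `M` of
functions `(G × A) → R`, as a homomorphism into the automorphism group; it is
used to form the semidirect product `M ⋊ G`. -/
def cayHom (G A R : Type*) [Group G] [AddCommGroup R] :
    G →* MulAut (Multiplicative ((G × A) → R)) where
  toFun g := AddEquiv.toMultiplicative (cayAct R g)
  map_one' := by
    apply MulEquiv.ext
    intro α
    apply Multiplicative.toAdd.injective
    funext x
    simp [cayAct, AddEquiv.toMultiplicative]
  map_mul' := by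
    intro g h
    apply MulEquiv.ext
    intro α
    apply Multiplicative.toAdd.injective
    funext x
    simp [cayAct, AddEquiv.toMultiplicative, mul_assoc]

/-- The generator `(δ_{(1,a)}, φ a)` of `M ⋊ G`. -/
def cayGen {G A : Type*} (R : Type*) [Group G] [AddCommGroup R] [One R]
    [DecidableEq G] [DecidableEq A] (φ : A → G) (a : A) :
    Multiplicative ((G × A) → R) ⋊[cayHom G A R] G :=
  ⟨ofAdd (fun x => if x = ((1 : G), a) then (1 : R) else 0), φ a⟩

/-- The model `H` of the universal Gaschütz `p`-extension `G^{ℤ/p}`: the subgroup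
of `M ⋊ G` generated by the elements `(δ_{(1,a)}, φ a)` for `a ∈ A`. -/
def gaschutzH (G A : Type*) [Group G] [DecidableEq G] [DecidableEq A]
    (p : ℕ) (φ : A → G) :
    Subgroup (Multiplicative ((G × A) → ZMod p) ⋊[cayHom G A (ZMod p)] G) :=
  Subgroup.closure (Set.range (cayGen (ZMod p) φ))

/-! Commuting `(α, g)` with the generator `(δ_{(1,a)}, φ a)` says that `α (·, a)` changes by
`δ_g - δ_1` under left multiplication by `(φ a)⁻¹`, while the other labels are
`(φ a)⁻¹`-invariant. Telescoping around the `(φ a)⁻¹`-cycle through `1` forces `g` onto that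
cycle. For a second label `b`, invariance then gives `α (g, b) = α (1, b)`, whereas telescoping
along the `(φ b)⁻¹`-path from `1` to `g` gives `α (g, b) = α (1, b) - 1` unless `g = 1`.
Once `g = 1`, every `α (·, c)` is invariant under the generators of `G`, hence constant;
conversely such an `(α, 1)` is central already in `M ⋊ G`. -/

section Telescoping

variable {G R : Type*} [Group G] [DecidableEq G] [AddCommGroupWithOne R] {F : G → R} {v g : G}

theorem sub_eq_neg_one_of_mul_left
    (hF : ∀ h, F (v * h) = F h + (if h = g then 1 else 0) - (if h = 1 then 1 else 0))
    {k : ℕ} (hk0 : 0 < k) (hk : k ≤ orderOf v) (hg : ∀ j < k, v ^ j ≠ g) :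
    F (v ^ k) - F 1 = -1 := by
  have hsum := Finset.sum_range_sub (fun j => F (v ^ j)) k
  simp only [pow_succ', hF, pow_zero] at hsum
  rw [← hsum]
  have hone : ∑ j ∈ Finset.range k, (if v ^ j = 1 then (1 : R) else 0) = 1 := by
    rw [Finset.sum_eq_single_of_mem 0 (Finset.mem_range.2 hk0) fun j hj hj0 => ?_, pow_zero,
      if_pos rfl]
    exact if_neg (pow_ne_one_of_lt_orderOf hj0 ((Finset.mem_range.1 hj).trans_le hk))
  have hnone : ∑ j ∈ Finset.range k, (if v ^ j = g then (1 : R) else 0) = 0 :=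
    Finset.sum_eq_zero fun j hj => if_neg (hg j (Finset.mem_range.1 hj))
  simp only [add_sub_cancel_left, add_sub_assoc, Finset.sum_sub_distrib, hone, hnone, zero_sub]

theorem exists_pow_eq_of_mul_left [Finite G] [NeZero (1 : R)]
    (hF : ∀ h, F (v * h) = F h + (if h = g then 1 else 0) - (if h = 1 then 1 else 0)) :
    ∃ j < orderOf v, v ^ j = g := by
  by_contra! hg
  have h := sub_eq_neg_one_of_mul_left hF (orderOf_pos v) le_rfl hg
  rw [pow_orderOf_eq_one, sub_self, eq_comm, neg_eq_zero] at h
  exact one_ne_zero h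

theorem apply_eq_sub_one_of_mul_left [Finite G] [NeZero (1 : R)]
    (hF : ∀ h, F (v * h) = F h + (if h = g then 1 else 0) - (if h = 1 then 1 else 0))
    (hg : g ≠ 1) : F g = F 1 - 1 := by
  obtain ⟨k, hk, rfl⟩ := exists_pow_eq_of_mul_left hF
  have hk0 : 0 < k := Nat.pos_of_ne_zero fun h => hg (by rw [h, pow_zero])
  have hfirst : ∀ j < k, v ^ j ≠ v ^ k := fun j hj hjk =>
    hj.ne (pow_injOn_Iio_orderOf (hj.trans hk) hk hjk)
  have h := sub_eq_neg_one_of_mul_left hF hk0 hk.le hfirst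
  rw [sub_eq_iff_eq_add'] at h
  rw [h, sub_eq_add_neg]

end Telescoping

theorem apply_mul_eq_of_mem_closure {G X : Type*} [Group G] {S : Set G} {F : G → X}
    (hF : ∀ s ∈ S, ∀ h, F (s * h) = F h) {x : G} (hx : x ∈ Subgroup.closure S) (h : G) :
    F (x * h) = F h := by
  induction hx using Subgroup.closure_induction generalizing h with
  | mem s hs => exact hF s hs h
  | one => rw [one_mul]
  | mul x y _ _ ihx ihy => rw [mul_assoc, ihx, ihy]
  | inv x _ ihx => rw [← ihx, mul_inv_cancel_left]

theorem SemidirectProduct.inl_mem_center {N G : Type*} [Group N] [Group G] {φ : G →* MulAut N}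
    {n : N} (hn : n ∈ Subgroup.center N) (hfix : ∀ g, φ g n = n) :
    inl n ∈ Subgroup.center (N ⋊[φ] G) := by
  refine Subgroup.mem_center_iff.2 fun x => SemidirectProduct.ext ?_ ?_
  · simp [hfix, Subgroup.mem_center_iff.1 hn]
  · simp

section CayleyModule

variable {G A R : Type*} [Group G] [DecidableEq G] [DecidableEq A] [AddCommGroup R] [One R]
  {φ : A → G} {α : (G × A) → R} {g : G}

omit [DecidableEq G] [DecidableEq A] [One R] in
@[simp]
theorem toAdd_cayHom_apply (g : G) (x : Multiplicative ((G × A) → R)) (y : G × A) :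
    toAdd (cayHom G A R g x) y = toAdd x (g⁻¹ * y.1, y.2) :=
  rfl

theorem apply_of_commute_cayGen {a : A}
    (hcomm : cayGen R φ a * ⟨ofAdd α, g⟩ = ⟨ofAdd α, g⟩ * cayGen R φ a) (h : G) (c : A) :
    (if (h, c) = (1, a) then 1 else 0) + α ((φ a)⁻¹ * h, c) =
      α (h, c) + (if (h, c) = (g, a) then 1 else 0) := by
  have := congrFun (congrArg (fun x => toAdd x.left) hcomm) (h, c)
  simpa [cayGen, Prod.ext_iff, inv_mul_eq_one, eq_comm] using this

theorem apply_inv_mul_of_commute_cayGen_of_ne {a c : A}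
    (hcomm : cayGen R φ a * ⟨ofAdd α, g⟩ = ⟨ofAdd α, g⟩ * cayGen R φ a) (hca : c ≠ a) (h : G) :
    α ((φ a)⁻¹ * h, c) = α (h, c) := by
  simpa [hca] using apply_of_commute_cayGen hcomm h c

theorem apply_inv_mul_of_commute_cayGen {a : A}
    (hcomm : cayGen R φ a * ⟨ofAdd α, g⟩ = ⟨ofAdd α, g⟩ * cayGen R φ a) (h : G) :
    α ((φ a)⁻¹ * h, a) = α (h, a) + (if h = g then 1 else 0) - (if h = 1 then 1 else 0) := by
  rw [eq_sub_iff_add_eq, add_comm]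
  simpa using apply_of_commute_cayGen hcomm h a

theorem apply_eq_of_commute_cayGen (hφ : Subgroup.closure (Set.range φ) = ⊤)
    (hcomm : ∀ a, cayGen R φ a * ⟨ofAdd α, 1⟩ = ⟨ofAdd α, 1⟩ * cayGen R φ a) (h k : G) (c : A) :
    α (h, c) = α (k, c) := by
  have hinv : ∀ s ∈ Set.range φ, ∀ h, α (s * h, c) = α (h, c) := by
    rintro _ ⟨a, rfl⟩ h
    have := apply_of_commute_cayGen (hcomm a) (φ a * h) c
    rw [inv_mul_cancel_left, add_comm, add_left_inj] at this
    exact this.symm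
  have := apply_mul_eq_of_mem_closure (F := fun h => α (h, c)) hinv
    (hφ ▸ Subgroup.mem_top (h * k⁻¹)) k
  rwa [inv_mul_cancel_right] at this

end CayleyModule

theorem eq_one_of_commute_cayGen {G A R : Type*} [Group G] [Finite G] [DecidableEq G]
    [DecidableEq A] [AddCommGroupWithOne R] [NeZero (1 : R)] {φ : A → G} {α : (G × A) → R}
    {g : G} {a b : A} (hab : a ≠ b)
    (ha : cayGen R φ a * ⟨ofAdd α, g⟩ = ⟨ofAdd α, g⟩ * cayGen R φ a)
    (hb : cayGen R φ b * ⟨ofAdd α, g⟩ = ⟨ofAdd α, g⟩ * cayGen R φ b) :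
    g = 1 := by
  by_contra hg
  have hdrop : α (g, b) = α (1, b) - 1 :=
    apply_eq_sub_one_of_mul_left (F := fun h => α (h, b)) (apply_inv_mul_of_commute_cayGen hb) hg
  obtain ⟨j, -, hj⟩ := exists_pow_eq_of_mul_left (F := fun h => α (h, a))
    (apply_inv_mul_of_commute_cayGen ha)
  have hinv : α (g * 1, b) = α (1, b) := by
    refine apply_mul_eq_of_mem_closure (S := {(φ a)⁻¹}) (F := fun h => α (h, b)) ?_ ?_ 1
    · rintro s rfl h
      exact apply_inv_mul_of_commute_cayGen_of_ne ha hab.symm h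
    · rw [← hj]
      exact Subgroup.pow_mem _ (Subgroup.subset_closure (Set.mem_singleton _)) j
  rw [mul_one, hdrop, sub_eq_self] at hinv
  exact one_ne_zero hinv

/-- An element `(α, g)` of `H = G^{ℤ/p}` is central in `H` iff
`g = 1` and `α` is constant on edges with the same label. -/
theorem center_of_gaschutz_extension
    {G A : Type*} [Group G] [Fintype G] [Fintype A] [DecidableEq G] [DecidableEq A]
    (hA : 2 ≤ Fintype.card A)
    (p : ℕ) (hp : p.Prime)
    (φ : A → G) (hgen : Subgroup.closure (Set.range φ) = ⊤)
    (α : (G × A) → ZMod p) (g : G)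
    (hmem : (⟨ofAdd α, g⟩ :
        Multiplicative ((G × A) → ZMod p) ⋊[cayHom G A (ZMod p)] G) ∈ gaschutzH G A p φ) :
    (⟨⟨ofAdd α, g⟩, hmem⟩ : gaschutzH G A p φ) ∈ Subgroup.center (gaschutzH G A p φ) ↔
      (g = 1 ∧ ∀ (h k : G) (a : A), α (h, a) = α (k, a)) := by
  constructor
  · intro hcent
    have hcomm (a : A) := congrArg Subtype.val
      (Subgroup.mem_center_iff.1 hcent ⟨cayGen _ φ a, Subgroup.subset_closure ⟨a, rfl⟩⟩)
    have : Fact p.Prime := ⟨hp⟩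
    obtain ⟨a, b, hab⟩ := Fintype.exists_pair_of_one_lt_card hA
    obtain rfl := eq_one_of_commute_cayGen hab (hcomm a) (hcomm b)
    exact ⟨rfl, apply_eq_of_commute_cayGen hgen hcomm⟩
  · rintro ⟨rfl, hα⟩
    have hfix (x : G) : cayHom G A (ZMod p) x (ofAdd α) = ofAdd α :=
      toAdd.injective (funext fun y => hα _ _ y.2)
    have hcent := SemidirectProduct.inl_mem_center
      (Subgroup.mem_center_iff.2 fun _ => mul_comm _ (ofAdd α)) hfix
    exact Subgroup.mem_center_iff.2 fun y => Subtype.ext (Subgroup.mem_center_iff.1 hcent y)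
end

section
/- For every function f : A → ℤ/pℤ, the element (α_f, 1) of M ⋊ G, where α_f(g, a) = f(a) for all g ∈ G and a ∈ A, belongs to the subgroup H and lies in the center of H. -/
open Multiplicative

/-!
Let `s = φ a` have order `n`. The power `(δ_{(1,a)}, s) ^ n` is `(1_{⟨s⟩ × {a}}, 1)`. Since `H`
maps onto `G` and `M` is abelian, conjugation by `H` makes `H ∩ M` a `G`-invariant subgroup of
`M`, so it contains every translate `1_{g⟨s⟩ × {a}}`; summing over representatives of the cosets
of `⟨s⟩` gives `1_{G × {a}}`, and `α_f` is a `ℤ/p`-linear combination of these. Finally `α_f` is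
`G`-invariant, hence central in all of `M ⋊ G`.
-/

namespace SemidirectProduct

variable {N G : Type*} [CommGroup N] [Group G] {ψ : G →* MulAut N}

theorem mul_inl_mul_inv (x : N ⋊[ψ] G) (n : N) : x * inl n * x⁻¹ = inl (ψ x.right n) := by
  ext
  · simp only [mul_left, inv_left, left_inl, right_inl, mul_right, mul_one]
    rw [← MulAut.mul_apply, ← map_mul, mul_inv_cancel, map_one, MulAut.one_apply,
      mul_right_comm, mul_inv_cancel, one_mul]
  · simp

theorem inl_aut_mem {H : Subgroup (N ⋊[ψ] G)} (hH : H.map rightHom = ⊤) (g : G) {n : N}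
    (hn : inl n ∈ H) : inl (ψ g n) ∈ H := by
  obtain ⟨x, hx, rfl⟩ : g ∈ H.map rightHom := hH ▸ Subgroup.mem_top g
  rw [rightHom_eq_right, ← mul_inl_mul_inv]
  exact H.mul_mem (H.mul_mem hx hn) (H.inv_mem hx)

theorem commute_inl_of_forall_aut_eq {n : N} (hn : ∀ g, ψ g n = n) (x : N ⋊[ψ] G) :
    Commute (inl n) x := by
  ext
  · simp [hn, mul_comm]
  · simp

end SemidirectProduct

theorem Subgroup.sum_quotient_sum_subgroup {G M : Type*} [Group G] [Fintype G] [AddCommMonoid M]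
    (S : Subgroup G) [Fintype S] [Fintype (G ⧸ S)] (F : G → M) :
    ∑ q : G ⧸ S, ∑ t : S, F (q.out * t) = ∑ x, F x := by
  have hmk : ∀ (q : G ⧸ S) (t : S), ((q.out * t : G) : G ⧸ S) = q := fun q t => by
    rw [QuotientGroup.mk_mul_of_mem _ t.2, QuotientGroup.out_eq']
  rw [← Fintype.sum_prod_type']
  refine Fintype.sum_bijective (fun qt => qt.1.out * (qt.2 : G)) ⟨?_, fun x => ?_⟩ _ _ fun _ => rfl
  · rintro ⟨q, t⟩ ⟨q', t'⟩ h
    obtain rfl : q = q' := by rw [← hmk q t, ← hmk q' t']; exact congrArg _ h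
    simpa using h
  · refine ⟨((x : G ⧸ S), ⟨(x : G ⧸ S).out⁻¹ * x, ?_⟩), mul_inv_cancel_left _ _⟩
    rw [← QuotientGroup.eq, QuotientGroup.out_eq']

theorem IsOfFinOrder.sum_range_orderOf {G M : Type*} [Group G] [AddCommMonoid M] {s : G}
    [Fintype (Subgroup.zpowers s)] (hs : IsOfFinOrder s) (F : G → M) :
    ∑ j ∈ Finset.range (orderOf s), F (s ^ j) = ∑ t : Subgroup.zpowers s, F t := by
  rw [← Fin.sum_univ_eq_sum_range (fun j => F (s ^ j)), ← (finEquivZPowers hs).sum_comp]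
  rfl

open SemidirectProduct

section Cayley

variable {G A R : Type*} [Group G] [AddCommGroup R] [DecidableEq G] [DecidableEq A]

theorem cayHom_ofAdd_single (g : G) (x : G × A) (r : R) :
    cayHom G A R g (ofAdd (Pi.single x r)) = ofAdd (Pi.single (g * x.1, x.2) r) := by
  refine congrArg ofAdd (funext fun y => ?_)
  change (Pi.single x r : G × A → R) (g⁻¹ * y.1, y.2) = _
  simp only [Pi.single_apply, Prod.ext_iff, inv_mul_eq_iff_eq_mul]

theorem cayGen_eq [One R] (φ : A → G) (a : A) :
    cayGen R φ a = ⟨ofAdd (Pi.single (1, a) 1), φ a⟩ := by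
  rw [cayGen]
  congr 2
  exact funext fun x => (Pi.single_apply _ _ x).symm

theorem cayGen_pow [One R] (φ : A → G) (a : A) (k : ℕ) :
    cayGen R φ a ^ k =
      ⟨ofAdd (∑ j ∈ Finset.range k, Pi.single (φ a ^ j, a) 1), φ a ^ k⟩ := by
  induction k with
  | zero => rw [pow_zero, pow_zero]; apply SemidirectProduct.ext <;> simp
  | succ k ih =>
    rw [pow_succ, ih, cayGen_eq]
    apply SemidirectProduct.ext
    · change _ * cayHom G A R (φ a ^ k) _ = _
      rw [cayHom_ofAdd_single, mul_one, Finset.sum_range_succ, ofAdd_add]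
    · exact (pow_succ _ _).symm

end Cayley

section Gaschutz

variable {G A : Type*} [Group G] [DecidableEq G] [DecidableEq A] {p : ℕ} {φ : A → G}

variable (G A p φ) in
/-- `H ∩ M`, as a `ℤ/p`-submodule of `M`. -/
def gaschutzKer : Submodule (ZMod p) ((G × A) → ZMod p) :=
  AddSubgroup.toZModSubmodule p
    (Subgroup.toAddSubgroup' ((gaschutzH G A p φ).comap inl))

theorem mem_gaschutzKer {α : (G × A) → ZMod p} :
    α ∈ gaschutzKer G A p φ ↔
      (⟨ofAdd α, 1⟩ : Multiplicative ((G × A) → ZMod p) ⋊[cayHom G A (ZMod p)] G) ∈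
        gaschutzH G A p φ :=
  Iff.rfl

theorem map_rightHom_gaschutzH (hgen : Subgroup.closure (Set.range φ) = ⊤) :
    (gaschutzH G A p φ).map rightHom = ⊤ := by
  rw [gaschutzH, MonoidHom.map_closure, ← Set.range_comp]
  exact hgen

theorem toAdd_cayHom_mem_gaschutzKer (hgen : Subgroup.closure (Set.range φ) = ⊤) (g : G)
    {α : (G × A) → ZMod p} (hα : α ∈ gaschutzKer G A p φ) :
    toAdd (cayHom G A (ZMod p) g (ofAdd α)) ∈ gaschutzKer G A p φ :=
  mem_gaschutzKer.2 (inl_aut_mem (map_rightHom_gaschutzH hgen) g hα)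

theorem sum_range_orderOf_single_mem_gaschutzKer (a : A) :
    ∑ j ∈ Finset.range (orderOf (φ a)), Pi.single (φ a ^ j, a) 1 ∈ gaschutzKer G A p φ := by
  have h := (gaschutzH G A p φ).pow_mem (Subgroup.subset_closure (Set.mem_range_self a))
    (orderOf (φ a))
  rwa [cayGen_pow, pow_orderOf_eq_one] at h

theorem sum_single_mem_gaschutzKer [Fintype G] (hgen : Subgroup.closure (Set.range φ) = ⊤)
    (a : A) : ∑ x : G, Pi.single (x, a) 1 ∈ gaschutzKer G A p φ := by
  classical
  have hs : IsOfFinOrder (φ a) := isOfFinOrder_of_finite _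
  rw [← (Subgroup.zpowers (φ a)).sum_quotient_sum_subgroup]
  refine Submodule.sum_mem _ fun q _ => ?_
  have h := toAdd_cayHom_mem_gaschutzKer hgen q.out
    (sum_range_orderOf_single_mem_gaschutzKer (p := p) a)
  rw [← hs.sum_range_orderOf fun t => (Pi.single (q.out * t, a) 1 : (G × A) → ZMod p)]
  simpa only [ofAdd_sum, map_prod, toAdd_prod, cayHom_ofAdd_single, toAdd_ofAdd] using h

end Gaschutz

theorem comp_snd_eq_sum_smul_sum_single {G A R : Type*} [Fintype G] [Fintype A] [DecidableEq G]
    [DecidableEq A] [Semiring R] (f : A → R) :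
    (fun x : G × A => f x.2) = ∑ a, f a • ∑ x : G, Pi.single (x, a) 1 := by
  simp_rw [Finset.smul_sum, ← Pi.single_smul', smul_eq_mul, mul_one]
  rw [← Fintype.sum_prod_type_right (fun x => Pi.single x (f x.2)), Finset.univ_sum_single]

theorem constant_function_gives_central_element_general
    {G A : Type*} [Group G] [Fintype G] [Fintype A] [DecidableEq G] [DecidableEq A]
    (p : ℕ)
    (φ : A → G) (hgen : Subgroup.closure (Set.range φ) = ⊤)
    (f : A → ZMod p) :
    (⟨ofAdd (fun x : G × A => f x.2), (1 : G)⟩ :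
        Multiplicative ((G × A) → ZMod p) ⋊[cayHom G A (ZMod p)] G) ∈ gaschutzH G A p φ ∧
    ∀ x ∈ gaschutzH G A p φ,
      Commute (⟨ofAdd (fun x : G × A => f x.2), (1 : G)⟩ :
        Multiplicative ((G × A) → ZMod p) ⋊[cayHom G A (ZMod p)] G) x := by
  refine ⟨mem_gaschutzKer.1 ?_, fun x _ => commute_inl_of_forall_aut_eq (fun _ => rfl) x⟩
  rw [comp_snd_eq_sum_smul_sum_single]
  exact Submodule.sum_mem _ fun a _ =>
    Submodule.smul_mem _ _ (sum_single_mem_gaschutzKer hgen a)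

/-- For every `f : A → ℤ/pℤ`, the element `(α_f, 1)` with
`α_f(g, a) = f a` belongs to `H` and is central in `H`. -/
theorem constant_function_gives_central_element
    {G A : Type*} [Group G] [Fintype G] [Fintype A] [DecidableEq G] [DecidableEq A]
    (hA : 2 ≤ Fintype.card A)
    (p : ℕ) (hp : p.Prime)
    (φ : A → G) (hgen : Subgroup.closure (Set.range φ) = ⊤)
    (f : A → ZMod p) :
    (⟨ofAdd (fun x : G × A => f x.2), (1 : G)⟩ :
        Multiplicative ((G × A) → ZMod p) ⋊[cayHom G A (ZMod p)] G) ∈ gaschutzH G A p φ ∧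
    ∀ x ∈ gaschutzH G A p φ,
      Commute (⟨ofAdd (fun x : G × A => f x.2), (1 : G)⟩ :
        Multiplicative ((G × A) → ZMod p) ⋊[cayHom G A (ZMod p)] G) x :=
  constant_function_gives_central_element_general p φ hgen f
end

section
/- Let Φ_p : F → M ⋊ G be the homomorphism from the free group F on A sending each a ∈ A to (δ_{(1,a)}, φ(a)), let H be the image of Φ_p, and let Z(H) be the center of H. Then for every w ∈ F, the image of Φ_p(w) in the quotient H/Z(H) is trivial if and only if [w]_G = 1 and c_w(g, a) ≡ c_w(h, a) (mod p) for all g, h ∈ G and all a ∈ A. -/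
open Multiplicative

/-- The homomorphism from the free group on `A` to `M ⋊ G` sending `a` to
`(δ_{(1,a)}, φ a)`. -/
def cayLift {G A : Type*} (R : Type*) [Group G] [AddCommGroup R] [One R]
    [DecidableEq G] [DecidableEq A] (φ : A → G) :
    FreeGroup A →* (Multiplicative ((G × A) → R) ⋊[cayHom G A R] G) :=
  FreeGroup.lift (cayGen R φ)

/-- The edge-traversal count `c_w : G × A → ℤ` of a word `w` in the free group:
`c_w (g, a)` is the signed number of times the path reading `w` from `1` in the
Cayley graph of `G` traverses the edge from `g` to `g·φ a` labeled `a`. -/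
def edgeCount {G A : Type*} [Group G] [DecidableEq G] [DecidableEq A]
    (φ : A → G) (w : FreeGroup A) : (G × A) → ℤ :=
  toAdd (cayLift ℤ φ w).left

lemma cayHom_apply' {G A R : Type*} [Group G] [AddCommGroup R] (g : G)
    (α : Multiplicative ((G × A) → R)) (y : G × A) :
    toAdd ((cayHom G A R g) α) y = toAdd α (g⁻¹ * y.1, y.2) := rfl

lemma cayLift_right {G A : Type*} [Group G] [DecidableEq G] [DecidableEq A]
    (R : Type*) [AddCommGroup R] [One R] (φ : A → G) (w : FreeGroup A) :
    (cayLift R φ w).right = FreeGroup.lift φ w := by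
  have h : SemidirectProduct.rightHom.comp (cayLift (G := G) R φ) = FreeGroup.lift φ := by
    apply FreeGroup.ext_hom
    intro a
    simp [cayLift, cayGen]
  exact DFunLike.congr_fun h w

lemma cayLift_left_cast {G A : Type*} [Group G] [DecidableEq G] [DecidableEq A]
    (p : ℕ) (φ : A → G) (w : FreeGroup A) (x : G × A) :
    toAdd (cayLift (ZMod p) φ w).left x = ((edgeCount φ w x : ℤ) : ZMod p) := by
  classical
  let c : ((G × A) → ℤ) →+ ((G × A) → ZMod p) := (Int.castAddHom (ZMod p)).compLeft (G × A)
  have compat : ∀ g : G,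
      (AddMonoidHom.toMultiplicative c).comp ((cayHom G A ℤ) g).toMonoidHom
        = (((cayHom G A (ZMod p)) ((MonoidHom.id G) g)).toMonoidHom).comp
            (AddMonoidHom.toMultiplicative c) := by
    intro g
    ext α
    rfl
  let red := SemidirectProduct.map (AddMonoidHom.toMultiplicative c) (MonoidHom.id G) compat
  have hred : red.comp (cayLift ℤ φ) = cayLift (ZMod p) φ := by
    apply FreeGroup.ext_hom
    intro a
    rw [MonoidHom.comp_apply,
      show (cayLift ℤ φ) (FreeGroup.of a) = cayGen ℤ φ a from by simp [cayLift],
      show (cayLift (ZMod p) φ) (FreeGroup.of a) = cayGen (ZMod p) φ a from by simp [cayLift]]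
    apply SemidirectProduct.ext
    · apply Multiplicative.toAdd.injective
      funext y
      show c (fun x => if x = ((1:G), a) then (1:ℤ) else 0) y = _
      simp [c, AddMonoidHom.compLeft, cayGen]
    · rfl
  have h2 : cayLift (ZMod p) φ w = red (cayLift ℤ φ w) := (DFunLike.congr_fun hred w).symm
  rw [h2]
  rfl

lemma gaschutz_key {G A : Type*} [Group G] [Fintype G] [DecidableEq G] [DecidableEq A]
    [Nonempty A]
    {p : ℕ} [Fact p.Prime] {φ : A → G} (hgen : Subgroup.closure (Set.range φ) = ⊤)
    (hA : ∀ a : A, ∃ b : A, b ≠ a)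
    (m : (G × A) → ZMod p) (g : G)
    (hE : ∀ (a : A) (h : G) (b : A),
      (if (h, b) = ((1 : G), a) then (1 : ZMod p) else 0) + m ((φ a)⁻¹ * h, b)
        = m (h, b) + (if (g⁻¹ * h, b) = ((1 : G), a) then (1 : ZMod p) else 0)) :
    g = 1 ∧ ∀ (g' h' : G) (a : A), m (g', a) = m (h', a) := by
  -- same-letter specialization
  have Ea : ∀ (a : A) (h : G),
      (if h = 1 then (1 : ZMod p) else 0) + m ((φ a)⁻¹ * h, a)
        = m (h, a) + (if g = h then (1 : ZMod p) else 0) := by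
    intro a h
    have e := hE a h a
    simp only [Prod.mk.injEq, and_true, inv_mul_eq_one] at e
    exact e
  -- telescoping
  have T : ∀ (a : A) (i : ℕ),
      m (((φ a)⁻¹) ^ i, a)
        = m ((1 : G), a) + ∑ j ∈ Finset.range i,
            ((if g = ((φ a)⁻¹) ^ j then (1 : ZMod p) else 0)
              - (if ((φ a)⁻¹) ^ j = 1 then (1 : ZMod p) else 0)) := by
    intro a i
    induction i with
    | zero => simp
    | succ i ih =>
      rw [Finset.sum_range_succ, pow_succ']
      have h := Ea a (((φ a)⁻¹) ^ i)
      linear_combination ih + h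
  have hpow1 : ∀ (t : G) (j : ℕ), j < orderOf t → (t ^ j = 1 ↔ j = 0) := by
    intro t j hj
    constructor
    · intro hh
      by_contra h0
      exact absurd (Nat.le_of_dvd (Nat.pos_of_ne_zero h0) (orderOf_dvd_of_pow_eq_one hh))
        (not_le.mpr hj)
    · rintro rfl; simp
  have claimA : ∀ a : A, ∃ j : ℕ, ((φ a)⁻¹) ^ j = g := by
    intro a
    by_contra hcon
    push_neg at hcon
    set t := (φ a)⁻¹ with ht
    have hn : 0 < orderOf t := orderOf_pos t
    have h2 := T a (orderOf t)
    rw [pow_orderOf_eq_one] at h2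
    have hsum : ∑ j ∈ Finset.range (orderOf t),
        ((if g = t ^ j then (1 : ZMod p) else 0)
          - (if t ^ j = 1 then (1 : ZMod p) else 0)) = 0 := by
      linear_combination - h2
    rw [Finset.sum_sub_distrib] at hsum
    have hg0 : ∑ j ∈ Finset.range (orderOf t), (if g = t ^ j then (1 : ZMod p) else 0) = 0 := by
      apply Finset.sum_eq_zero
      intro j _
      rw [if_neg]
      intro hh
      exact hcon j hh.symm
    have h10 : ∑ j ∈ Finset.range (orderOf t), (if t ^ j = 1 then (1 : ZMod p) else 0) = 1 := by
      rw [Finset.sum_congr rfl (g := fun j => if j = 0 then (1 : ZMod p) else 0)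
        (fun j hj => by simp only [hpow1 t j (Finset.mem_range.mp hj)])]
      rw [Finset.sum_ite_eq' (Finset.range (orderOf t)) 0 (fun _ => (1 : ZMod p))]
      simp [hn]
    rw [hg0, h10] at hsum
    simp at hsum
  have hg : g = 1 := by
    by_contra hg
    obtain ⟨a0⟩ := ‹Nonempty A›
    obtain ⟨b, hb⟩ := hA a0
    set t := (φ a0)⁻¹ with ht
    have hn : 0 < orderOf t := orderOf_pos t
    obtain ⟨j0, hj0⟩ := claimA a0
    have hj0' : t ^ (j0 % orderOf t) = g := by rw [pow_mod_orderOf]; exact hj0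
    set j1 := j0 % orderOf t with hj1def
    have hj1lt : j1 < orderOf t := Nat.mod_lt _ hn
    have hj1ne : j1 ≠ 0 := by
      intro h0
      rw [h0, pow_zero] at hj0'
      exact hg hj0'.symm
    -- telescoping to j1
    have hT := T a0 j1
    have hsum : ∑ j ∈ Finset.range j1,
        ((if g = t ^ j then (1 : ZMod p) else 0)
          - (if t ^ j = 1 then (1 : ZMod p) else 0)) = -1 := by
      rw [Finset.sum_sub_distrib]
      have hgz : ∑ j ∈ Finset.range j1, (if g = t ^ j then (1 : ZMod p) else 0) = 0 := by
        apply Finset.sum_eq_zero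
        intro j hj
        rw [if_neg]
        intro hh
        have hjlt := Finset.mem_range.mp hj
        have : j = j1 := pow_injOn_Iio_orderOf (Set.mem_Iio.mpr (hjlt.trans hj1lt))
          (Set.mem_Iio.mpr hj1lt) (hh.symm.trans hj0'.symm)
        omega
      have h1z : ∑ j ∈ Finset.range j1, (if t ^ j = 1 then (1 : ZMod p) else 0) = 1 := by
        rw [Finset.sum_congr rfl (g := fun j => if j = 0 then (1 : ZMod p) else 0)
          (fun j hj => by simp only [hpow1 t j ((Finset.mem_range.mp hj).trans hj1lt)])]
        rw [Finset.sum_ite_eq' (Finset.range j1) 0 (fun _ => (1 : ZMod p))]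
        simp [Nat.pos_of_ne_zero hj1ne]
      rw [hgz, h1z]
      ring
    rw [hsum, hj0'] at hT
    -- hT : m (g, a0) = m (1, a0) + -1
    -- invariance of m(·,a0) under φ b, hence under g
    have inv1 : ∀ h : G, m ((φ b)⁻¹ * h, a0) = m (h, a0) := by
      intro h
      have e := hE b h a0
      rw [if_neg (by simp [Prod.ext_iff]; intro _; exact Ne.symm hb),
        if_neg (by simp [Prod.ext_iff]; intro _; exact Ne.symm hb)] at e
      linear_combination e
    have invpow : ∀ (k : ℕ) (h : G), m (((φ b)⁻¹) ^ k * h, a0) = m (h, a0) := by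
      intro k
      induction k with
      | zero => intro h; simp
      | succ k ih =>
        intro h
        rw [pow_succ', mul_assoc, inv1]
        exact ih h
    obtain ⟨jb, hjb⟩ := claimA b
    have : m (g, a0) = m ((1 : G), a0) := by
      have := invpow jb 1
      rw [hjb, mul_one] at this
      exact this
    rw [this] at hT
    exact one_ne_zero (by linear_combination hT : (1 : ZMod p) = 0)
  subst hg
  have hinv : ∀ (a : A) (h : G) (b : A), m ((φ a)⁻¹ * h, b) = m (h, b) := by
    intro a h b
    have e := hE a h b
    rw [inv_one, one_mul] at e
    linear_combination e
  have hP : ∀ k : G, ∀ (h : G) (b : A), m (k * h, b) = m (h, b) := by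
    intro k
    have hk : k ∈ Subgroup.closure (Set.range φ) := by rw [hgen]; trivial
    induction hk using Subgroup.closure_induction with
    | mem x hx =>
      obtain ⟨a, rfl⟩ := hx
      intro h b
      have := hinv a (φ a * h) b
      rw [inv_mul_cancel_left] at this
      exact this.symm
    | one => intro h b; rw [one_mul]
    | mul x y hx hy ihx ihy =>
      intro h b
      rw [mul_assoc, ihx, ihy]
    | inv x hx ihx =>
      intro h b
      have := ihx (x⁻¹ * h) b
      rw [mul_inv_cancel_left] at this
      exact this.symm
  refine ⟨rfl, ?_⟩
  intro g' h' a
  have := hP (g' * h'⁻¹) h' a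
  rwa [inv_mul_cancel_right] at this

lemma cayGen_right' {G A : Type*} (R : Type*) [Group G] [AddCommGroup R] [One R]
    [DecidableEq G] [DecidableEq A] (φ : A → G) (a : A) :
    (cayGen R φ a).right = φ a := rfl

lemma cayGen_left_apply' {G A : Type*} (R : Type*) [Group G] [AddCommGroup R] [One R]
    [DecidableEq G] [DecidableEq A] (φ : A → G) (a : A) (y : G × A) :
    toAdd (cayGen R φ a).left y = if y = ((1 : G), a) then (1 : R) else 0 := rfl

lemma semiprod_mul_left_apply {G A R : Type*} [Group G] [AddCommGroup R]
    (u v : Multiplicative ((G × A) → R) ⋊[cayHom G A R] G) (y : G × A) :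
    toAdd (u * v).left y = toAdd u.left y + toAdd v.left (u.right⁻¹ * y.1, y.2) := rfl

/-- For `w` in the free group on `A`, the image of `Φ_p(w)` in
`H/Z(H)` (where `H` is the image of `Φ_p`) is trivial iff `w` evaluates to `1`
in `G` and all edge-traversal counts of `w` on edges with the same label are
congruent mod `p`. -/
theorem gaschutz_mod_center_word_problem
    {G A : Type*} [Group G] [Fintype G] [Fintype A] [DecidableEq G] [DecidableEq A]
    (hA : 2 ≤ Fintype.card A)
    (p : ℕ) (hp : p.Prime)
    (φ : A → G) (hgen : Subgroup.closure (Set.range φ) = ⊤)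
    (w : FreeGroup A) :
    (QuotientGroup.mk
        (⟨cayLift (ZMod p) φ w, MonoidHom.mem_range.mpr ⟨w, rfl⟩⟩ :
          (cayLift (ZMod p) φ).range) =
      (1 : (cayLift (ZMod p) φ).range ⧸ Subgroup.center (cayLift (ZMod p) φ).range)) ↔
      (FreeGroup.lift φ w = 1 ∧
        ∀ (g h : G) (a : A), Int.ModEq (p : ℤ) (edgeCount φ w (g, a)) (edgeCount φ w (h, a))) := by
  haveI : Fact p.Prime := ⟨hp⟩
  haveI : Nonempty A := Fintype.card_pos_iff.mp (by omega)
  have hA' : ∀ a : A, ∃ b : A, b ≠ a := fun a => Fintype.exists_ne_of_one_lt_card hA a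
  rw [QuotientGroup.eq_one_iff, Subgroup.mem_center_iff]
  set x := cayLift (ZMod p) φ w with hx
  -- characterize centrality by commutation with the generators
  have hchar : (∀ y : (cayLift (ZMod p) φ).range,
        y * ⟨x, MonoidHom.mem_range.mpr ⟨w, rfl⟩⟩ = ⟨x, MonoidHom.mem_range.mpr ⟨w, rfl⟩⟩ * y)
      ↔ ∀ a : A, cayGen (ZMod p) φ a * x = x * cayGen (ZMod p) φ a := by
    constructor
    · intro hc a
      have hmem : cayGen (ZMod p) φ a ∈ (cayLift (ZMod p) φ).range :=
        ⟨FreeGroup.of a, by simp [cayLift]⟩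
      have := hc ⟨cayGen (ZMod p) φ a, hmem⟩
      exact Subtype.ext_iff.mp this
    · intro hc y
      apply Subtype.ext
      have hy : (y : Multiplicative ((G × A) → ZMod p) ⋊[cayHom G A (ZMod p)] G)
          ∈ Subgroup.closure (Set.range (cayGen (ZMod p) φ)) := by
        have hr : (cayLift (ZMod p) φ).range
            = Subgroup.closure (Set.range (cayGen (ZMod p) φ)) :=
          FreeGroup.range_lift_eq_closure
        rw [← hr]; exact y.2
      show (y : Multiplicative ((G × A) → ZMod p) ⋊[cayHom G A (ZMod p)] G) * x = x * y
      refine Subgroup.closure_induction ?_ ?_ ?_ ?_ hy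
      · rintro z ⟨a, rfl⟩ ; exact hc a
      · rw [one_mul, mul_one]
      · intro z1 z2 _ _ h1 h2
        exact (Commute.mul_left (h1 : Commute z1 x) (h2 : Commute z2 x) : _)
      · intro z _ h1
        exact (Commute.inv_left (h1 : Commute z x) : _)
  rw [hchar]
  -- characterize commutation with a generator componentwise
  have hgen_iff : ∀ a : A,
      (cayGen (ZMod p) φ a * x = x * cayGen (ZMod p) φ a) ↔
      ((∀ (h : G) (b : A),
          (if (h, b) = ((1 : G), a) then (1 : ZMod p) else 0) + toAdd x.left ((φ a)⁻¹ * h, b)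
            = toAdd x.left (h, b)
              + (if (x.right⁻¹ * h, b) = ((1 : G), a) then (1 : ZMod p) else 0))
        ∧ φ a * x.right = x.right * φ a) := by
    intro a
    constructor
    · intro hcomm
      have h1 := congrArg SemidirectProduct.left hcomm
      have h2 := congrArg SemidirectProduct.right hcomm
      rw [SemidirectProduct.mul_right, SemidirectProduct.mul_right] at h2
      refine ⟨?_, h2⟩
      intro h b
      have h3 := congrFun (congrArg Multiplicative.toAdd h1) (h, b)
      simpa [semiprod_mul_left_apply, cayHom_apply', cayGen_right', cayGen_left_apply'] using h3
    · rintro ⟨h1, h2⟩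
      apply SemidirectProduct.ext
      · apply Multiplicative.toAdd.injective
        funext y
        obtain ⟨h, b⟩ := y
        simpa [semiprod_mul_left_apply, cayHom_apply', cayGen_right', cayGen_left_apply'] using h1 h b
      · rw [SemidirectProduct.mul_right, SemidirectProduct.mul_right]
        exact h2
  -- translate the right-hand side
  have hright : x.right = FreeGroup.lift φ w := cayLift_right (ZMod p) φ w
  have hcast : ∀ y : G × A, toAdd x.left y = ((edgeCount φ w y : ℤ) : ZMod p) :=
    fun y => cayLift_left_cast p φ w y
  constructor
  · intro hc
    obtain ⟨hg1, hconst⟩ := gaschutz_key hgen hA' (fun y => toAdd x.left y) x.right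
      (fun a h b => ((hgen_iff a).mp (hc a)).1 h b)
    refine ⟨by rw [← hright]; exact hg1, ?_⟩
    intro g' h' a
    have := hconst g' h' a
    rw [hcast, hcast] at this
    exact (ZMod.intCast_eq_intCast_iff _ _ _).mp this
  · rintro ⟨hw1, hmod⟩
    have hg1 : x.right = 1 := by rw [hright]; exact hw1
    have hconst : ∀ (g' h' : G) (a : A), toAdd x.left (g', a) = toAdd x.left (h', a) := by
      intro g' h' a
      rw [hcast, hcast]
      exact (ZMod.intCast_eq_intCast_iff _ _ _).mpr (hmod g' h' a)
    intro a
    rw [hgen_iff a]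
    constructor
    · intro h b
      rw [hg1, inv_one, one_mul]
      have : toAdd x.left ((φ a)⁻¹ * h, b) = toAdd x.left (h, b) := hconst _ _ _
      rw [this]
      ring
    · rw [hg1, mul_one, one_mul]
end

section
/- Let H̃ = H/Z(H) be the quotient of H by its center, marked by ψ̃ : A → H̃ sending a to the image of (δ_{(1,a)}, φ(a)), and let π̃ : H̃ → G be the homomorphism induced by the coordinate projection M ⋊ G → G (well defined because every central element of H has trivial G-component). Let K be a nontrivial subgroup of G and L = π̃⁻¹(K) ≤ H̃. Then for every g ∈ H̃ and every a ∈ A, every walk in the Cayley graph Γ(H̃) starting at g and ending at g·ψ̃(a) traverses, for some l ∈ L, the edge (l·g, a). In particular, g and g·ψ̃(a) lie in distinct connected components of Γ(H̃) with all edges {(l·g, a) : l ∈ L} removed. -/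
open Multiplicative

/-- The quotient `H̃ = H/Z(H)`, a model of `G^{∼ℤ/p}`. -/
abbrev gaschutzQuot (G A : Type*) [Group G] [DecidableEq G] [DecidableEq A]
    (p : ℕ) (φ : A → G) :=
  gaschutzH G A p φ ⧸ Subgroup.center (gaschutzH G A p φ)

/-- The marking `ψ̃ : A → H̃` sending `a` to the image of `(δ_{(1,a)}, φ a)`. -/
def gaschutzPsiTilde {G A : Type*} [Group G] [DecidableEq G] [DecidableEq A]
    (p : ℕ) (φ : A → G) (a : A) : gaschutzQuot G A p φ :=
  QuotientGroup.mk ⟨cayGen (ZMod p) φ a, Subgroup.subset_closure ⟨a, rfl⟩⟩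

/-- The projection `π : H → G`, the restriction to `H` of `M ⋊ G → G`. -/
def gaschutzPi (G A : Type*) [Group G] [DecidableEq G] [DecidableEq A]
    (p : ℕ) (φ : A → G) : gaschutzH G A p φ →* G :=
  SemidirectProduct.rightHom.comp (gaschutzH G A p φ).subtype

/-- The product in `T` of a list of letters `(a, ε)` with `a ∈ A`, `ε = ±1`
(encoded by a Boolean), under the marking `ψ : A → T`. -/
def wordProd {A T : Type*} [Group T] (ψ : A → T) : List (A × Bool) → T
  | [] => 1
  | (b, e) :: l => (if e then ψ b else (ψ b)⁻¹) * wordProd ψ l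

/-- `walkTraverses ψ x w t a` means: the walk in the Cayley graph `Γ(T)`
(w.r.t. the marking `ψ : A → T`) reading the list of letters `w` starting at
the vertex `x` traverses (in some direction) the edge labeled `a` from `t`
to `t · ψ a`. -/
def walkTraverses {A T : Type*} [Group T] (ψ : A → T) : T → List (A × Bool) → T → A → Prop
  | _, [], _, _ => False
  | x, (b, e) :: l, t, a =>
      (b = a ∧ (if e then x = t else x * (ψ b)⁻¹ = t)) ∨
        walkTraverses ψ (x * (if e then ψ b else (ψ b)⁻¹)) l t a

set_option linter.unusedSectionVars false

theorem wordProd_map {A T S : Type*} [Group T] [Group S] (f : T →* S) (ψ : A → T) :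
    ∀ l : List (A × Bool), f (wordProd ψ l) = wordProd (fun a => f (ψ a)) l
  | [] => by simp [wordProd]
  | (b, e) :: l => by
    simp only [wordProd, map_mul, wordProd_map f ψ l]
    congr 1
    cases e <;> simp

theorem walkTraverses_cons {A T : Type*} [Group T] (ψ : A → T) (x : T) (b : A) (e : Bool)
    (l : List (A × Bool)) (t : T) (a : A) :
    walkTraverses ψ x ((b, e) :: l) t a ↔
      ((b = a ∧ (if e then x = t else x * (ψ b)⁻¹ = t)) ∨
        walkTraverses ψ (x * (if e then ψ b else (ψ b)⁻¹)) l t a) := Iff.rfl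

section Abstract
variable {G : Type*} [Group G] {p : ℕ}

theorem teleAux [DecidableEq G] (f : G → ZMod p) (ξ yy : G)
    (hrel : ∀ v, f (ξ * v) = f v + (if v = yy then 1 else 0) - (if v = 1 then 1 else 0)) :
    ∀ t : ℕ, f (ξ ^ t) = f 1 + ∑ i ∈ Finset.range t,
      ((if ξ ^ i = yy then (1 : ZMod p) else 0) - (if ξ ^ i = 1 then 1 else 0)) := by
  intro t
  induction t with
  | zero => simp
  | succ t ih =>
      rw [Finset.sum_range_succ, pow_succ', hrel (ξ ^ t), ih]; ring

theorem exists_pow_eq [Fintype G] [DecidableEq G] (hp1 : (1 : ZMod p) ≠ 0)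
    (f : G → ZMod p) (ξ yy : G) (hy : yy ≠ 1)
    (hrel : ∀ v, f (ξ * v) = f v + (if v = yy then 1 else 0) - (if v = 1 then 1 else 0)) :
    ∃ i : ℕ, ξ ^ (i + 1) = yy := by
  by_contra hno
  push_neg at hno
  have h := teleAux f ξ yy hrel (orderOf ξ)
  rw [pow_orderOf_eq_one] at h
  have hsum : ∑ i ∈ Finset.range (orderOf ξ),
      ((if ξ ^ i = yy then (1 : ZMod p) else 0) - (if ξ ^ i = 1 then 1 else 0)) = 0 := by
    have := h.symm
    rwa [add_eq_left] at this
  have hcong : ∀ i ∈ Finset.range (orderOf ξ),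
      ((if ξ ^ i = yy then (1 : ZMod p) else 0) - (if ξ ^ i = 1 then 1 else 0))
        = if i = 0 then -1 else 0 := by
    intro i hi
    rw [Finset.mem_range] at hi
    rcases Nat.eq_zero_or_pos i with h0 | h0
    · subst h0; simp [Ne.symm hy]
    · obtain ⟨j, rfl⟩ : ∃ j, i = j + 1 := ⟨i - 1, by omega⟩
      have e1 : ξ ^ (j + 1) ≠ yy := hno j
      have e2 : ξ ^ (j + 1) ≠ 1 := by
        intro h1
        have := orderOf_dvd_of_pow_eq_one h1
        have : orderOf ξ ≤ j + 1 := Nat.le_of_dvd (by omega) this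
        omega
      simp [e1, e2]
  rw [Finset.sum_congr rfl hcong] at hsum
  simp only [Finset.sum_ite_eq' (Finset.range (orderOf ξ)) 0 (fun _ => (-1 : ZMod p))] at hsum
  have hpos : 0 < orderOf ξ := orderOf_pos ξ
  rw [if_pos (Finset.mem_range.mpr hpos)] at hsum
  exact hp1 (neg_eq_zero.mp hsum)

theorem center_y_eq_one [Fintype G] [DecidableEq G] {A : Type*} [DecidableEq A]
    (hp1 : (1 : ZMod p) ≠ 0) (a₁ a₂ : A) (h12 : a₁ ≠ a₂) (φ : A → G) (yy : G)
    (m : G → A → ZMod p)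
    (R1 : ∀ (b : A) (v : G) (l : A), m ((φ b)⁻¹ * v) l
        = m v l + (if v = yy ∧ l = b then 1 else 0) - (if v = 1 ∧ l = b then 1 else 0)) :
    yy = 1 := by
  by_contra hy
  set ξ₁ := (φ a₁)⁻¹ with hξ₁
  set ξ₂ := (φ a₂)⁻¹ with hξ₂
  have hrel₁ : ∀ v, m (ξ₁ * v) a₁
      = m v a₁ + (if v = yy then 1 else 0) - (if v = 1 then 1 else 0) := by
    intro v; simpa using R1 a₁ v a₁
  have hrel₂ : ∀ v, m (ξ₂ * v) a₂
      = m v a₂ + (if v = yy then 1 else 0) - (if v = 1 then 1 else 0) := by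
    intro v; simpa using R1 a₂ v a₂
  have hinv₂ : ∀ v, m (ξ₂ * v) a₁ = m v a₁ := by
    intro v; simpa [h12] using R1 a₂ v a₁
  obtain ⟨i₂, hi₂⟩ := exists_pow_eq hp1 (fun v => m v a₂) ξ₂ yy hy hrel₂
  obtain ⟨i₁, hi₁⟩ := exists_pow_eq hp1 (fun v => m v a₁) ξ₁ yy hy hrel₁
  -- m (yy * v) a₁ = m v a₁
  have hpowinv : ∀ (t : ℕ) (v : G), m (ξ₂ ^ t * v) a₁ = m v a₁ := by
    intro t
    induction t with
    | zero => intro v; simp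
    | succ t ih => intro v; rw [pow_succ', mul_assoc, hinv₂, ih]
  have hyinv : m yy a₁ = m 1 a₁ := by
    have := hpowinv (i₂ + 1) 1
    rwa [mul_one, hi₂] at this
  -- minimal exponent for a₁
  have hex : ∃ i : ℕ, ξ₁ ^ (i + 1) = yy := ⟨i₁, hi₁⟩
  set s := Nat.find hex with hs_def
  have hs : ξ₁ ^ (s + 1) = yy := Nat.find_spec hex
  have hmin : ∀ j, j < s → ξ₁ ^ (j + 1) ≠ yy := fun j hj => Nat.find_min hex hj
  have htele := teleAux (fun v => m v a₁) ξ₁ yy hrel₁ (s + 1)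
  have hterm : ∑ i ∈ Finset.range (s + 1),
      ((if ξ₁ ^ i = yy then (1 : ZMod p) else 0) - (if ξ₁ ^ i = 1 then 1 else 0)) = -1 := by
    have hcong : ∀ i ∈ Finset.range (s + 1),
        ((if ξ₁ ^ i = yy then (1 : ZMod p) else 0) - (if ξ₁ ^ i = 1 then 1 else 0))
          = if i = 0 then -1 else 0 := by
      intro i hi
      rw [Finset.mem_range, Nat.lt_succ_iff] at hi
      rcases Nat.eq_zero_or_pos i with h0 | h0
      · subst h0; simp [Ne.symm hy]
      · obtain ⟨j, rfl⟩ : ∃ j, i = j + 1 := ⟨i - 1, by omega⟩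
        have e1 : ξ₁ ^ (j + 1) ≠ yy := hmin j (by omega)
        have e2 : ξ₁ ^ (j + 1) ≠ 1 := by
          intro h1
          have hlt : s - (j + 1) < s := by omega
          apply hmin (s - (j + 1)) hlt
          have : ξ₁ ^ (s - (j + 1) + 1) * ξ₁ ^ (j + 1) = ξ₁ ^ (s + 1) := by
            rw [← pow_add]; congr 1; omega
          rw [h1, mul_one] at this
          rw [this, hs]
        simp [e1, e2]
    rw [Finset.sum_congr rfl hcong,
      Finset.sum_ite_eq' (Finset.range (s + 1)) 0 (fun _ => (-1 : ZMod p)),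
      if_pos (Finset.mem_range.mpr (by omega))]
  rw [hterm] at htele
  rw [hs] at htele
  rw [hyinv] at htele
  have h0 : (-1 : ZMod p) = 0 := (add_eq_left.mp htele.symm)
  exact hp1 (neg_eq_zero.mp h0)

theorem const_of_inv [DecidableEq G] {A : Type*} [DecidableEq A] (m : G → A → ZMod p) (φ : A → G)
    (hgen : Subgroup.closure (Set.range φ) = ⊤)
    (hinv : ∀ (b : A) (v : G) (l : A), m ((φ b)⁻¹ * v) l = m v l) :
    ∀ v l, m v l = m 1 l := by
  let S : Subgroup G :=
    { carrier := {g | ∀ v l, m (g * v) l = m v l}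
      one_mem' := by intro v l; simp
      mul_mem' := by
        intro x y hx hy v l
        have h1 : m (x * (y * v)) l = m (y * v) l := hx (y * v) l
        rw [mul_assoc, h1, hy v l]
      inv_mem' := by
        intro x hx v l
        have h2 := hx (x⁻¹ * v) l
        rw [mul_inv_cancel_left] at h2
        exact h2.symm }
  have hφ : ∀ b, φ b ∈ S := by
    intro b
    have h1 : (φ b)⁻¹ ∈ S := fun v l => hinv b v l
    simpa using S.inv_mem h1
  have hS : ∀ g : G, g ∈ S := by
    intro g
    have : Subgroup.closure (Set.range φ) ≤ S :=
      Subgroup.closure_le S |>.mpr (by rintro _ ⟨b, rfl⟩; exact hφ b)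
    exact this (hgen ▸ Subgroup.mem_top g)
  intro v l
  have := hS v 1 l
  rwa [mul_one] at this
end Abstract

section Concrete
variable {G A : Type*} [Group G] [Fintype G] [Fintype A] [DecidableEq G] [DecidableEq A]
  {p : ℕ} {φ : A → G}

abbrev WW (G A : Type*) [Group G] [AddCommGroup (ZMod 0)] (p : ℕ) :=
  Multiplicative ((G × A) → ZMod p) ⋊[cayHom G A (ZMod p)] G

def mval (x : Multiplicative ((G × A) → ZMod p) ⋊[cayHom G A (ZMod p)] G) (v : G) (l : A) :
    ZMod p := Multiplicative.toAdd x.left (v, l)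

theorem mval_one (v : G) (l : A) :
    mval (1 : Multiplicative ((G × A) → ZMod p) ⋊[cayHom G A (ZMod p)] G) v l = 0 := rfl

theorem mval_mul (x y : Multiplicative ((G × A) → ZMod p) ⋊[cayHom G A (ZMod p)] G)
    (v : G) (l : A) : mval (x * y) v l = mval x v l + mval y (x.right⁻¹ * v) l := rfl

theorem mval_gen (b : A) (v : G) (l : A) :
    mval (cayGen (ZMod p) φ b) v l = if (v, l) = (1, b) then 1 else 0 := rfl

theorem mval_inv (x : Multiplicative ((G × A) → ZMod p) ⋊[cayHom G A (ZMod p)] G)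
    (v : G) (l : A) : mval x⁻¹ v l = - mval x (x.right * v) l := by
  show Multiplicative.toAdd (((cayHom G A (ZMod p)) x.right⁻¹) x.left⁻¹) (v,l) = _
  simp [mval, cayAct, cayHom, AddEquiv.toMultiplicative]

theorem right_gen (b : A) : (cayGen (ZMod p) φ b).right = φ b := rfl

def psiSub (p : ℕ) (φ : A → G) (a : A) : gaschutzH G A p φ :=
  ⟨cayGen (ZMod p) φ a, Subgroup.subset_closure ⟨a, rfl⟩⟩

theorem psiTilde_eq (a : A) :
    gaschutzPsiTilde p φ a
      = QuotientGroup.mk' (Subgroup.center (gaschutzH G A p φ)) (psiSub p φ a) := rfl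

theorem coe_psiSub (b : A) : ((psiSub p φ b : gaschutzH G A p φ) :
    Multiplicative ((G × A) → ZMod p) ⋊[cayHom G A (ZMod p)] G) = cayGen (ZMod p) φ b := rfl

theorem pi_psiSub (b : A) : gaschutzPi G A p φ (psiSub p φ b) = φ b := rfl

theorem center_struct (hp1 : (1 : ZMod p) ≠ 0) (hA : 2 ≤ Fintype.card A)
    (hgen : Subgroup.closure (Set.range φ) = ⊤)
    (c : gaschutzH G A p φ) (hc : c ∈ Subgroup.center (gaschutzH G A p φ)) :
    (c : Multiplicative ((G × A) → ZMod p) ⋊[cayHom G A (ZMod p)] G).right = 1 ∧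
      ∀ v l, mval (c : Multiplicative ((G × A) → ZMod p) ⋊[cayHom G A (ZMod p)] G) v l
        = mval (c : Multiplicative ((G × A) → ZMod p) ⋊[cayHom G A (ZMod p)] G) 1 l := by
  set cc : Multiplicative ((G × A) → ZMod p) ⋊[cayHom G A (ZMod p)] G := ↑c with hcc
  set y : G := cc.right with hy_def
  have hcomm : ∀ b : A, cayGen (ZMod p) φ b * cc = cc * cayGen (ZMod p) φ b := by
    intro b
    have h := (Subgroup.mem_center_iff.mp hc) (psiSub p φ b)
    have := congrArg (Subtype.val) h
    simpa [psiSub] using this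
  have hyR : ∀ b : A, φ b * y = y * φ b := by
    intro b
    have := congrArg SemidirectProduct.right (hcomm b)
    simpa [SemidirectProduct.mul_right, right_gen] using this
  have key : ∀ (b : A) (v : G) (l : A), mval cc ((φ b)⁻¹ * v) l
      = mval cc v l + (if v = y ∧ l = b then 1 else 0) - (if v = 1 ∧ l = b then 1 else 0) := by
    intro b v l
    have h := congrArg (fun x => mval x v l) (hcomm b)
    simp only [mval_mul, mval_gen, right_gen] at h
    have e1 : ((v, l) = ((1 : G), b)) ↔ (v = 1 ∧ l = b) := by simp [Prod.ext_iff]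
    have e2 : ((y⁻¹ * v, l) = ((1 : G), b)) ↔ (v = y ∧ l = b) := by
      constructor
      · rintro h'
        rw [Prod.ext_iff] at h'
        obtain ⟨h1, h2⟩ := h'
        exact ⟨by rw [← inv_mul_eq_one.mp h1], h2⟩
      · rintro ⟨rfl, rfl⟩
        simp
    rw [if_congr e1 rfl rfl, if_congr e2 rfl rfl] at h
    linear_combination h
  have hy1 : y = 1 := by
    obtain ⟨a₁, a₂, h12⟩ := Fintype.exists_pair_of_one_lt_card (by omega : 1 < Fintype.card A)
    exact center_y_eq_one hp1 a₁ a₂ h12 φ y (fun v l => mval cc v l) key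
  refine ⟨hy1, ?_⟩
  have hinv : ∀ (b : A) (v : G) (l : A), mval cc ((φ b)⁻¹ * v) l = mval cc v l := by
    intro b v l
    have := key b v l
    rw [hy1] at this
    simpa using this
  exact const_of_inv (fun v l => mval cc v l) φ hgen hinv

end Concrete

section MainCount
variable {G A : Type*} [Group G] [Fintype G] [Fintype A] [DecidableEq G] [DecidableEq A]
  {p : ℕ} {φ : A → G}

theorem main_count (K : Subgroup G) (L : Subgroup (gaschutzQuot G A p φ))
    (hLsub : ∀ s : gaschutzH G A p φ, gaschutzPi G A p φ s ∈ K →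
      QuotientGroup.mk' (Subgroup.center (gaschutzH G A p φ)) s ∈ L)
    (gh : gaschutzH G A p φ) (a : A) :
    ∀ (lst : List (A × Bool)) (x : gaschutzH G A p φ),
      (∀ z ∈ L, ¬ walkTraverses (gaschutzPsiTilde p φ)
          (QuotientGroup.mk' (Subgroup.center (gaschutzH G A p φ)) x) lst
          (z * QuotientGroup.mk' (Subgroup.center (gaschutzH G A p φ)) gh) a) →
      ∀ u : G, gaschutzPi G A p φ x * u * (gaschutzPi G A p φ gh)⁻¹ ∈ K →
      mval ((wordProd (psiSub p φ) lst : gaschutzH G A p φ) :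
        Multiplicative ((G × A) → ZMod p) ⋊[cayHom G A (ZMod p)] G) u a = 0 := by
  intro lst
  induction lst with
  | nil =>
      intro x hw u hu
      show mval ((1 : gaschutzH G A p φ) :
        Multiplicative ((G × A) → ZMod p) ⋊[cayHom G A (ZMod p)] G) u a = 0
      rfl
  | cons he l ih =>
      obtain ⟨b, e⟩ := he
      intro x hw u hu
      have hnw : ∀ z ∈ L, ¬ walkTraverses (gaschutzPsiTilde p φ)
          (QuotientGroup.mk' (Subgroup.center (gaschutzH G A p φ)) x *
            (if e then gaschutzPsiTilde p φ b else (gaschutzPsiTilde p φ b)⁻¹)) l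
          (z * QuotientGroup.mk' (Subgroup.center (gaschutzH G A p φ)) gh) a := by
        intro z hz hcont
        exact hw z hz (Or.inr hcont)
      cases e with
      | true =>
          have hmk : QuotientGroup.mk' (Subgroup.center (gaschutzH G A p φ)) (x * psiSub p φ b)
              = QuotientGroup.mk' (Subgroup.center (gaschutzH G A p φ)) x *
                gaschutzPsiTilde p φ b := by
            rw [map_mul, psiTilde_eq]
          have hrest := ih (x * psiSub p φ b)
            (by rw [hmk]; simpa using hnw) ((φ b)⁻¹ * u)
            (by rw [map_mul, pi_psiSub]; simpa [mul_assoc] using hu)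
          show mval ((psiSub p φ b * wordProd (psiSub p φ) l : gaschutzH G A p φ) :
            Multiplicative ((G × A) → ZMod p) ⋊[cayHom G A (ZMod p)] G) u a = 0
          rw [Subgroup.coe_mul, mval_mul]
          have hhead : mval ((psiSub p φ b : gaschutzH G A p φ) :
              Multiplicative ((G × A) → ZMod p) ⋊[cayHom G A (ZMod p)] G) u a = 0 := by
            show (if ((u, a) = ((1 : G), b)) then (1 : ZMod p) else 0) = 0
            rw [if_neg]
            intro hpair
            simp only [Prod.mk.injEq] at hpair
            obtain ⟨hu1, hab⟩ := hpair
            have hzK : gaschutzPi G A p φ (x * gh⁻¹) ∈ K := by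
              rw [map_mul, map_inv]
              have := hu
              rw [hu1] at this
              simpa using this
            refine hw (QuotientGroup.mk' (Subgroup.center (gaschutzH G A p φ)) (x * gh⁻¹))
              (hLsub _ hzK) (Or.inl ⟨hab.symm, ?_⟩)
            simp only [if_true]
            rw [map_mul, map_inv]
            group
          rw [hhead, zero_add]
          have : ((psiSub p φ b : gaschutzH G A p φ) :
              Multiplicative ((G × A) → ZMod p) ⋊[cayHom G A (ZMod p)] G).right = φ b := rfl
          rw [this]
          exact hrest
      | false =>
          have hmk : QuotientGroup.mk' (Subgroup.center (gaschutzH G A p φ)) (x * (psiSub p φ b)⁻¹)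
              = QuotientGroup.mk' (Subgroup.center (gaschutzH G A p φ)) x *
                (gaschutzPsiTilde p φ b)⁻¹ := by
            rw [map_mul, map_inv, psiTilde_eq]
          have hrest := ih (x * (psiSub p φ b)⁻¹)
            (by rw [hmk]; simpa using hnw) (φ b * u)
            (by rw [map_mul, map_inv, pi_psiSub]; simpa [mul_assoc] using hu)
          show mval (((psiSub p φ b)⁻¹ * wordProd (psiSub p φ) l : gaschutzH G A p φ) :
            Multiplicative ((G × A) → ZMod p) ⋊[cayHom G A (ZMod p)] G) u a = 0
          rw [Subgroup.coe_mul, mval_mul]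
          have hhead : mval (((psiSub p φ b)⁻¹ : gaschutzH G A p φ) :
              Multiplicative ((G × A) → ZMod p) ⋊[cayHom G A (ZMod p)] G) u a = 0 := by
            rw [Subgroup.coe_inv, coe_psiSub, mval_inv, right_gen, mval_gen, neg_eq_zero]
            rw [if_neg]
            intro hpair
            simp only [Prod.mk.injEq] at hpair
            obtain ⟨hu1, hab⟩ := hpair
            have huval : u = (φ b)⁻¹ := by
              rw [← inv_mul_eq_one] at hu1 ⊢
              simpa [mul_assoc] using hu1
            have hzK : gaschutzPi G A p φ (x * (psiSub p φ b)⁻¹ * gh⁻¹) ∈ K := by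
              rw [map_mul, map_inv, map_mul, map_inv, pi_psiSub]
              have := hu
              rw [huval] at this
              simpa [mul_assoc] using this
            refine hw (QuotientGroup.mk'
                (Subgroup.center (gaschutzH G A p φ)) (x * (psiSub p φ b)⁻¹ * gh⁻¹))
              (hLsub _ hzK) (Or.inl ⟨hab.symm, ?_⟩)
            simp only [Bool.false_eq_true, if_false]
            rw [map_mul, map_inv, map_mul, map_inv, psiTilde_eq]
            group
          rw [hhead, zero_add]
          have : (((psiSub p φ b)⁻¹ : gaschutzH G A p φ) :
              Multiplicative ((G × A) → ZMod p) ⋊[cayHom G A (ZMod p)] G).right = (φ b)⁻¹ := rfl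
          rw [this, inv_inv]
          exact hrest

end MainCount

/-- Let `K ≤ G` be a nontrivial subgroup and `L = π̃⁻¹(K) ≤ H̃`,
where `H̃ = H/Z(H)` is the model of `G^{∼ℤ/p}`.  Then for every `g ∈ H̃` and
`a ∈ A`, every walk in `Γ(H̃)` from `g` to `g·ψ̃ a` traverses some edge
`(l·g, a)` with `l ∈ L`; in particular `g` and `g·ψ̃ a` lie in distinct
connected components after removal of these edges. -/
theorem removing_L_orbit_of_edge_disconnects
    {G A : Type*} [Group G] [Fintype G] [Fintype A] [DecidableEq G] [DecidableEq A]
    (hA : 2 ≤ Fintype.card A)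
    (p : ℕ) (hp : p.Prime)
    (φ : A → G) (hgen : Subgroup.closure (Set.range φ) = ⊤)
    (K : Subgroup G) (hK : K ≠ ⊥)
    (L : Subgroup (gaschutzQuot G A p φ))
    (hL : L = Subgroup.map
      (QuotientGroup.mk' (Subgroup.center (gaschutzH G A p φ)))
      (Subgroup.comap (gaschutzPi G A p φ) K))
    (g : gaschutzQuot G A p φ) (a : A)
    (lst : List (A × Bool))
    (hwalk : g * wordProd (gaschutzPsiTilde p φ) lst = g * gaschutzPsiTilde p φ a) :
    ∃ z ∈ L, walkTraverses (gaschutzPsiTilde p φ) g lst (z * g) a := by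

  haveI := Fact.mk hp
  have hp1 : (1 : ZMod p) ≠ 0 := one_ne_zero
  obtain ⟨gh, rfl⟩ := QuotientGroup.mk'_surjective (Subgroup.center (gaschutzH G A p φ)) g
  by_contra hcon
  push_neg at hcon
  have hw : wordProd (gaschutzPsiTilde p φ) lst = gaschutzPsiTilde p φ a :=
    mul_left_cancel hwalk
  have hw2 : QuotientGroup.mk' (Subgroup.center (gaschutzH G A p φ))
        (wordProd (psiSub p φ) lst)
      = QuotientGroup.mk' (Subgroup.center (gaschutzH G A p φ)) (psiSub p φ a) := by
    rw [wordProd_map]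
    exact hw
  obtain ⟨c, hcmem, hceq⟩ := (QuotientGroup.mk'_eq_mk' (Subgroup.center (gaschutzH G A p φ))).mp hw2
  have hwp : (wordProd (psiSub p φ) lst : gaschutzH G A p φ) = psiSub p φ a * c⁻¹ := by
    rw [← hceq]; group
  have hLsub : ∀ s : gaschutzH G A p φ, gaschutzPi G A p φ s ∈ K →
      QuotientGroup.mk' (Subgroup.center (gaschutzH G A p φ)) s ∈ L := by
    intro s hs
    rw [hL]
    exact ⟨s, Subgroup.mem_comap.mpr hs, rfl⟩
  have hmain := main_count K L hLsub gh a lst gh hcon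
  obtain ⟨-, hcconst⟩ := center_struct hp1 hA hgen c⁻¹ (Subgroup.inv_mem _ hcmem)
  have hval : ∀ u : G, mval ((wordProd (psiSub p φ) lst : gaschutzH G A p φ) :
        Multiplicative ((G × A) → ZMod p) ⋊[cayHom G A (ZMod p)] G) u a
      = (if u = 1 then 1 else 0)
        + mval ((c⁻¹ : gaschutzH G A p φ) :
            Multiplicative ((G × A) → ZMod p) ⋊[cayHom G A (ZMod p)] G) 1 a := by
    intro u
    rw [hwp, Subgroup.coe_mul, mval_mul, coe_psiSub, mval_gen, right_gen]
    congr 1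
    · simp [Prod.ext_iff]
    · exact hcconst _ _
  have h1 := hmain 1 (by simpa using K.one_mem)
  rw [hval 1, if_pos rfl] at h1
  obtain ⟨k0, hk0⟩ := Subgroup.ne_bot_iff_exists_ne_one.mp hK
  set x0 := gaschutzPi G A p φ gh with hx0
  have hcond2 : gaschutzPi G A p φ gh * (x0⁻¹ * ↑k0 * x0) * (gaschutzPi G A p φ gh)⁻¹ ∈ K := by
    rw [← hx0]
    have : x0 * (x0⁻¹ * ↑k0 * x0) * x0⁻¹ = ↑k0 := by group
    rw [this]
    exact k0.2
  have h2 := hmain (x0⁻¹ * ↑k0 * x0) hcond2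
  rw [hval _, if_neg] at h2
  · rw [zero_add] at h2
    rw [h2, add_zero] at h1
    exact hp1 h1
  · intro hone
    apply hk0
    have : (k0 : G) = 1 := by
      have := congrArg (fun w => x0 * w * x0⁻¹) hone
      simpa [mul_assoc] using this
    exact Subtype.ext this
end

section
/- Let H and G be finite groups marked by maps ψ : A → H and φ : A → G with generating images, let ρ : H → G be a surjective homomorphism with ρ ∘ ψ = φ, let N = ker ρ, and fix a ∈ A. Then the following are equivalent: (1) the Cayley graph Γ(H) is disconnected after removing the edges {(n, a) : n ∈ N}, i.e., there exist u, v ∈ H such that every walk in Γ(H) from u to v traverses some edge (n, a) with n ∈ N; (2) every walk in Γ(H) from 1 to ψ(a) traverses some edge (n, a) with n ∈ N; (3) for every n ∈ N, every walk in Γ(H) from n to n·ψ(a) traverses some edge (n', a) with n' ∈ N; (4) there is no list of letters in A × {1, −1} whose product in H equals ψ(a) and whose walk from 1 in Γ(G) never traverses the edge (1, a) (this last condition expresses that H dissolves the constellation Δ_a of Γ(G)). -/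
section Aux

variable {A T : Type*} [Group T]

def revWord {A : Type*} (w : List (A × Bool)) : List (A × Bool) :=
  (w.map fun p => (p.1, !p.2)).reverse

theorem revWord_cons {A : Type*} (b : A) (e : Bool) (l : List (A × Bool)) :
    revWord ((b, e) :: l) = revWord l ++ [(b, !e)] := by simp [revWord]

theorem wordProd_append (ψ : A → T) (w1 w2 : List (A × Bool)) :
    wordProd ψ (w1 ++ w2) = wordProd ψ w1 * wordProd ψ w2 := by
  induction w1 with
  | nil => simp [wordProd]
  | cons p l ih => obtain ⟨b, e⟩ := p; simp [wordProd, ih, mul_assoc]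

theorem wordProd_revWord (ψ : A → T) :
    ∀ w, wordProd ψ (revWord w) = (wordProd ψ w)⁻¹ := by
  intro w
  induction w with
  | nil => simp [revWord, wordProd]
  | cons p l ih =>
    obtain ⟨b, e⟩ := p
    rw [revWord_cons, wordProd_append, ih]
    cases e <;> simp [wordProd, mul_inv_rev]

theorem walkTraverses_mul (ψ : A → T) (g : T) (a : A) :
    ∀ (w : List (A × Bool)) (x t : T),
      walkTraverses ψ (g * x) w (g * t) a ↔ walkTraverses ψ x w t a := by
  intro w
  induction w with
  | nil => intro x t; exact Iff.rfl
  | cons p l ih =>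
    intro x t
    obtain ⟨b, e⟩ := p
    simp only [walkTraverses, mul_assoc, ih]
    cases e <;> simp [mul_assoc]

theorem walkTraverses_append (ψ : A → T) (a : A) :
    ∀ (w1 w2 : List (A × Bool)) (x t : T),
      walkTraverses ψ x (w1 ++ w2) t a ↔
        walkTraverses ψ x w1 t a ∨ walkTraverses ψ (x * wordProd ψ w1) w2 t a := by
  intro w1
  induction w1 with
  | nil => intro w2 x t; simp [walkTraverses, wordProd]
  | cons p l ih =>
    intro w2 x t
    obtain ⟨b, e⟩ := p
    simp only [List.cons_append, walkTraverses, List.append_eq, ih, wordProd, or_assoc, mul_assoc]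

theorem walkTraverses_revWord (ψ : A → T) (a : A) :
    ∀ (w : List (A × Bool)) (x t : T),
      walkTraverses ψ x (revWord w) t a ↔
        walkTraverses ψ (x * (wordProd ψ w)⁻¹) w t a := by
  intro w
  induction w with
  | nil => intro x t; simp [revWord, walkTraverses]
  | cons p l ih =>
    intro x t
    obtain ⟨b, e⟩ := p
    rw [revWord_cons, walkTraverses_append, ih, wordProd_revWord]
    simp only [walkTraverses, wordProd]
    cases e <;> simp [mul_inv_rev, mul_assoc, or_comm]

theorem proj_iff {A H G : Type*} [Group H] [Group G] (ψ : A → H) (φ : A → G)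
    (ρ : H →* G) (hcomp : ∀ b, ρ (ψ b) = φ b) (a : A) :
    ∀ (w : List (A × Bool)) (x : H),
      (∃ n, ρ n = 1 ∧ walkTraverses ψ x w n a) ↔ walkTraverses φ (ρ x) w 1 a := by
  intro w
  induction w with
  | nil => intro x; simp [walkTraverses]
  | cons p l ih =>
    intro x
    obtain ⟨b, e⟩ := p
    have hsb : ρ (if e then ψ b else (ψ b)⁻¹) = (if e then φ b else (φ b)⁻¹) := by
      cases e <;> simp [hcomp]
    constructor
    · rintro ⟨n, hn, (⟨hb, hc⟩ | hw)⟩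
      · left
        refine ⟨hb, ?_⟩
        cases e
        · simp only [if_neg Bool.false_ne_true] at hc ⊢
          rw [← hc] at hn
          simpa [hcomp] using hn
        · simp only [if_pos rfl] at hc ⊢
          rw [← hc] at hn; exact hn
      · right
        have := (ih (x * (if e then ψ b else (ψ b)⁻¹))).mp ⟨n, hn, hw⟩
        rwa [map_mul, hsb] at this
    · rintro (⟨hb, hc⟩ | hw)
      · cases e
        · simp only [if_neg Bool.false_ne_true] at hc ⊢
          refine ⟨x * (ψ b)⁻¹, ?_, Or.inl ⟨hb, rfl⟩⟩
          simpa [hcomp] using hc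
        · simp only [if_pos rfl] at hc ⊢
          exact ⟨x, hc, Or.inl ⟨hb, rfl⟩⟩
      · rw [← hsb, ← map_mul] at hw
        obtain ⟨n, hn, hwn⟩ := (ih (x * (if e then ψ b else (ψ b)⁻¹))).mpr hw
        exact ⟨n, hn, Or.inr hwn⟩

end Aux

/-- For marked finite groups `H ↠ G` (with `N = ker ρ`) and a
letter `a`, the following are equivalent: (1) removing the edges `{(n,a) : n ∈ N}`
disconnects `Γ(H)`; (2) every walk in `Γ(H)` from `1` to `ψ a` traverses such an
edge; (3) for every `n ∈ N`, every walk from `n` to `n·ψ a` traverses such an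
edge; (4) `H` dissolves the constellation `Δ_a` of `Γ(G)`. -/
theorem disconnecting_tfae
    {A H G : Type*} [Fintype A] [Group H] [Fintype H] [Group G] [Fintype G]
    (hA : 2 ≤ Fintype.card A)
    (ψ : A → H) (φ : A → G)
    (hψ : Subgroup.closure (Set.range ψ) = ⊤)
    (hφ : Subgroup.closure (Set.range φ) = ⊤)
    (ρ : H →* G) (hρ : Function.Surjective ρ)
    (hcomp : ∀ a, ρ (ψ a) = φ a)
    (a : A) :
    List.TFAE [
      -- (1) `Γ(H)` minus the edges `{(n,a) : n ∈ ker ρ}` is disconnected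
      ∃ u v : H, ∀ lst : List (A × Bool), u * wordProd ψ lst = v →
        ∃ n ∈ ρ.ker, walkTraverses ψ u lst n a,
      -- (2) `1` and `ψ a` are separated
      ∀ lst : List (A × Bool), wordProd ψ lst = ψ a →
        ∃ n ∈ ρ.ker, walkTraverses ψ 1 lst n a,
      -- (3) each `n ∈ N` and `n · ψ a` are separated
      ∀ n ∈ ρ.ker, ∀ lst : List (A × Bool), n * wordProd ψ lst = n * ψ a →
        ∃ n' ∈ ρ.ker, walkTraverses ψ n lst n' a,
      -- (4) `H` dissolves the constellation `Δ_a` of `Γ(G)`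
      ¬ ∃ lst : List (A × Bool), wordProd ψ lst = ψ a ∧
        ¬ walkTraverses φ 1 lst 1 a
    ] := by

  tfae_have 2 → 3 := by
    intro h2 n hn lst heq
    obtain ⟨n', hn', hw⟩ := h2 lst (mul_left_cancel heq)
    refine ⟨n * n', mul_mem hn hn', ?_⟩
    have := (walkTraverses_mul ψ n a lst 1 n').mpr hw
    simpa using this
  tfae_have 3 → 1 := by
    intro h3
    exact ⟨1, ψ a, fun lst heq => h3 1 (one_mem _) lst (by rw [heq, one_mul])⟩
  tfae_have 1 → 2 := by
    rintro ⟨u, v, huv⟩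
    by_contra h2
    push_neg at h2
    obtain ⟨lst0, hl0, hl0'⟩ := h2
    have nocut : ∀ g n : H, g ∈ ρ.ker → n ∈ ρ.ker → ¬ walkTraverses ψ g lst0 n a := by
      intro g n hg hn hw
      exact hl0' (g⁻¹ * n) (mul_mem (inv_mem hg) hn)
        ((walkTraverses_mul ψ g a lst0 1 (g⁻¹ * n)).mp (by simpa using hw))
    have key : ∀ (lst : List (A × Bool)) (x : H), ∃ lst',
        wordProd ψ lst' = wordProd ψ lst ∧ ∀ n ∈ ρ.ker, ¬ walkTraverses ψ x lst' n a := by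
      intro lst
      induction lst with
      | nil => exact fun x => ⟨[], rfl, fun n _ hw => hw⟩
      | cons p l ih =>
        intro x
        obtain ⟨b, e⟩ := p
        obtain ⟨l', hl', hl'n⟩ := ih (x * (if e then ψ b else (ψ b)⁻¹))
        by_cases hb : b = a
        · subst hb
          cases e
          · simp only [if_neg Bool.false_ne_true] at hl'n
            by_cases hx : x * (ψ b)⁻¹ ∈ ρ.ker
            · refine ⟨revWord lst0 ++ l', ?_, ?_⟩
              · rw [wordProd_append, wordProd_revWord, hl0, hl']
                simp [wordProd]
              · intro n hn hw
                rw [walkTraverses_append, wordProd_revWord, hl0] at hw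
                rcases hw with hw | hw
                · rw [walkTraverses_revWord, hl0] at hw
                  exact nocut _ n hx hn hw
                · exact hl'n n hn hw
            · refine ⟨(b, false) :: l', ?_, ?_⟩
              · simp [wordProd, hl']
              · rintro n hn (⟨-, hc⟩ | hw)
                · simp only [if_neg Bool.false_ne_true] at hc
                  exact hx (hc ▸ hn)
                · exact hl'n n hn hw
          · simp only [if_pos rfl] at hl'n
            by_cases hx : x ∈ ρ.ker
            · refine ⟨lst0 ++ l', ?_, ?_⟩
              · rw [wordProd_append, hl0, hl']
                simp [wordProd]
              · intro n hn hw
                rw [walkTraverses_append, hl0] at hw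
                rcases hw with hw | hw
                · exact nocut x n hx hn hw
                · exact hl'n n hn hw
            · refine ⟨(b, true) :: l', ?_, ?_⟩
              · simp [wordProd, hl']
              · rintro n hn (⟨-, hc⟩ | hw)
                · simp only [if_pos rfl] at hc
                  exact hx (hc ▸ hn)
                · exact hl'n n hn hw
        · refine ⟨(b, e) :: l', ?_, ?_⟩
          · simp [wordProd, hl']
          · rintro n hn (⟨hb', -⟩ | hw)
            · exact hb hb'
            · exact hl'n n hn hw
    have exists_word : ∀ h : H, ∃ lst, wordProd ψ lst = h := by
      let S : Subgroup H :=
        { carrier := {h | ∃ lst, wordProd ψ lst = h}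
          one_mem' := ⟨[], rfl⟩
          mul_mem' := by
            rintro x y ⟨l1, h1⟩ ⟨l2, h2⟩
            exact ⟨l1 ++ l2, by rw [wordProd_append, h1, h2]⟩
          inv_mem' := by
            rintro x ⟨l, h⟩
            exact ⟨revWord l, by rw [wordProd_revWord, h]⟩ }
      have hle : Subgroup.closure (Set.range ψ) ≤ S := by
        rw [Subgroup.closure_le]
        rintro _ ⟨b, rfl⟩
        exact ⟨[(b, true)], by simp [wordProd]⟩
      intro h
      exact hle (hψ ▸ Subgroup.mem_top h)
    obtain ⟨lst, hlst⟩ := exists_word (u⁻¹ * v)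
    obtain ⟨lst', hp, hno⟩ := key lst u
    obtain ⟨n, hn, hw⟩ := huv lst' (by rw [hp, hlst]; group)
    exact hno n hn hw
  tfae_have 2 ↔ 4 := by
    constructor
    · rintro h2 ⟨lst, hl, hnw⟩
      obtain ⟨n, hn, hw⟩ := h2 lst hl
      apply hnw
      have := (proj_iff ψ φ ρ hcomp a lst 1).mp ⟨n, hn, hw⟩
      simpa using this
    · intro h4 lst hl
      by_contra hno
      push_neg at hno
      apply h4
      refine ⟨lst, hl, fun hw => ?_⟩
      obtain ⟨n, hn, hwn⟩ := (proj_iff ψ φ ρ hcomp a lst 1).mpr (by simpa using hw)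
      exact hno n hn hwn
  tfae_finish
end

section
/- In the semidirect product K = N ⋊ G, the intersection of the commutator subgroup [K, K] with N is exactly the augmentation-zero subspace: {α : G → ℤ/pℤ : (α, 1) ∈ [K, K]} = {α : Σ_{g ∈ G} α(g) = 0}. -/
open Multiplicative

/-- The shift action of `g : G` on functions `G → R`: `(g · α)(h) = α (g⁻¹h)`. -/
def regAct {G : Type*} (R : Type*) [Group G] [AddCommGroup R] (g : G) :
    (G → R) ≃+ (G → R) where
  toFun α := fun x => α (g⁻¹ * x)
  invFun α := fun x => α (g * x)
  left_inv := by intro α; funext x; simp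
  right_inv := by intro α; funext x; simp
  map_add' := by intro α β; rfl

/-- The action of `G` on the (multiplicatively written) additive group `N` of
the group algebra `𝔽_p[G]` (functions `G → R`), as a homomorphism into the
automorphism group; it is used to form the semidirect product `K = N ⋊ G`. -/
def regHom (G R : Type*) [Group G] [AddCommGroup R] :
    G →* MulAut (Multiplicative (G → R)) where
  toFun g := AddEquiv.toMultiplicative (regAct R g)
  map_one' := by
    apply MulEquiv.ext
    intro α
    apply Multiplicative.toAdd.injective
    funext x
    simp [regAct, AddEquiv.toMultiplicative]
  map_mul' := by
    intro g h
    apply MulEquiv.ext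
    intro α
    apply Multiplicative.toAdd.injective
    funext x
    simp [regAct, AddEquiv.toMultiplicative, mul_assoc]

/-!
The augmentation `α ↦ ∑ g, α g` is invariant under the shift action, so it extends (trivially on
`G`) to a homomorphism from `K` to an abelian group; hence it vanishes on `[K, K]`. Conversely
`⁅g, δ₁ c⁆ = δ_g c - δ₁ c` for the point masses `δ_g c`, and every augmentation-zero `α` is the
sum of the `δ_g (α g) - δ₁ (α g)`.
-/

namespace GroupAlgebraSemidirect

variable {G R : Type*} [Group G] [AddCommGroup R]

local notation "K" => Multiplicative (G → R) ⋊[regHom G R] G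

theorem toAdd_regHom (g : G) (β : Multiplicative (G → R)) :
    toAdd (regHom G R g β) = regAct R g (toAdd β) :=
  rfl

section Augmentation

variable [Fintype G]

def augmentation : (G → R) →+ R where
  toFun β := ∑ g, β g
  map_zero' := by simp
  map_add' β γ := by simp [Finset.sum_add_distrib]

theorem augmentation_regAct (g : G) (β : G → R) :
    augmentation (regAct R g β) = augmentation β :=
  Fintype.sum_equiv (Equiv.mulLeft g⁻¹) _ _ fun _ => rfl

def augmentationHom : K →* Multiplicative R :=
  SemidirectProduct.lift (AddMonoidHom.toMultiplicative augmentation) 1 fun g => by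
    refine MonoidHom.ext fun β => ?_
    simpa [toAdd_regHom] using augmentation_regAct g (toAdd β)

theorem augmentationHom_inl (β : G → R) :
    augmentationHom (SemidirectProduct.inl (ofAdd β) : K) = ofAdd (∑ g, β g) :=
  SemidirectProduct.lift_inl _ _ _ _

theorem sum_eq_zero_of_inl_mem_commutator {β : G → R}
    (h : (SemidirectProduct.inl (ofAdd β) : K) ∈ commutator K) : ∑ g, β g = 0 := by
  have := Abelianization.commutator_subset_ker augmentationHom h
  rwa [MonoidHom.mem_ker, augmentationHom_inl, ofAdd_eq_one] at this

end Augmentation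

section PointMasses

variable [DecidableEq G]

theorem regHom_single_one (g : G) (c : R) :
    regHom G R g (ofAdd (Pi.single (1 : G) c)) = ofAdd (Pi.single g c) := by
  refine congrArg ofAdd (funext fun x => ?_)
  change (Pi.single 1 c : G → R) (g⁻¹ * x) = (Pi.single g c : G → R) x
  simp only [Pi.single_apply, inv_mul_eq_one, eq_comm]

open scoped commutatorElement in
theorem commutatorElement_inr_inl_single_one (g : G) (c : R) :
    ⁅(SemidirectProduct.inr g : K), SemidirectProduct.inl (ofAdd (Pi.single 1 c : G → R))⁆ =
      (SemidirectProduct.inl (ofAdd (Pi.single g c - Pi.single 1 c)) : K) := by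
  rw [commutatorElement_def, ← map_inv SemidirectProduct.inr g, ← SemidirectProduct.inl_aut,
    ← map_inv SemidirectProduct.inl, ← map_mul, regHom_single_one, ofAdd_sub, div_eq_mul_inv]

theorem inl_single_sub_single_one_mem_commutator (g : G) (c : R) :
    (SemidirectProduct.inl (ofAdd (Pi.single g c - Pi.single (1 : G) c)) : K) ∈ commutator K := by
  rw [← commutatorElement_inr_inl_single_one, commutator_def]
  exact Subgroup.commutator_mem_commutator (Subgroup.mem_top _) (Subgroup.mem_top _)

variable [Fintype G]

theorem eq_sum_single_sub_single_one_of_sum_eq_zero {β : G → R} (h : ∑ g, β g = 0) :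
    β = ∑ g, (Pi.single g (β g) - Pi.single (1 : G) (β g)) := by
  have : ∑ g, (Pi.single 1 (β g) : G → R) = Pi.single 1 (∑ g, β g) :=
    (map_sum (AddMonoidHom.single (fun _ => R) 1) β Finset.univ).symm
  rw [Finset.sum_sub_distrib, Finset.univ_sum_single, this, h, Pi.single_zero, sub_zero]

end PointMasses

theorem inl_mem_commutator_of_sum_eq_zero [Fintype G] {β : G → R} (h : ∑ g, β g = 0) :
    (SemidirectProduct.inl (ofAdd β) : K) ∈ commutator K := by
  classical
  suffices ofAdd β ∈ (commutator K).comap SemidirectProduct.inl from this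
  rw [eq_sum_single_sub_single_one_of_sum_eq_zero h, ofAdd_sum]
  exact Subgroup.prod_mem _ fun g _ => inl_single_sub_single_one_mem_commutator g (β g)

theorem inl_mem_commutator_iff [Fintype G] (β : G → R) :
    (SemidirectProduct.inl (ofAdd β) : K) ∈ commutator K ↔ ∑ g, β g = 0 :=
  ⟨sum_eq_zero_of_inl_mem_commutator, inl_mem_commutator_of_sum_eq_zero⟩

end GroupAlgebraSemidirect

theorem commutator_meet_group_algebra_general
    {G : Type*} [Group G] [Fintype G] (p : ℕ)
    (α : G → ZMod p) :
    (⟨ofAdd α, (1 : G)⟩ : Multiplicative (G → ZMod p) ⋊[regHom G (ZMod p)] G) ∈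
        commutator (Multiplicative (G → ZMod p) ⋊[regHom G (ZMod p)] G) ↔
      ∑ g : G, α g = 0 :=
  GroupAlgebraSemidirect.inl_mem_commutator_iff α

/-- In `K = 𝔽_p[G] ⋊ G`, the intersection of the commutator
subgroup with `N = 𝔽_p[G]` is the augmentation-zero subspace. -/
theorem commutator_meet_group_algebra
    {G : Type*} [Group G] [Fintype G] (p : ℕ) (hp : p.Prime)
    (α : G → ZMod p) :
    (⟨ofAdd α, (1 : G)⟩ : Multiplicative (G → ZMod p) ⋊[regHom G (ZMod p)] G) ∈
        commutator (Multiplicative (G → ZMod p) ⋊[regHom G (ZMod p)] G) ↔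
      ∑ g : G, α g = 0 :=
  commutator_meet_group_algebra_general p α
end

section
/- Suppose the prime p does not divide the order of G. If B is a commutative group and f : K → B is a group homomorphism whose kernel contains the center of K, then the kernel of f contains all of N (i.e., all elements (α, 1)); equivalently, f factors as f = g ∘ π for some homomorphism g : G → B, where π : K → G is the canonical projection (α, x) ↦ x. In particular, every abelian quotient of K/Z(K) is a quotient of G. -/
open Multiplicative

/-!
Since `B` is commutative, `f ∘ inl` is invariant under the action of `G`. For `n ∈ N` the norm
`∏ g, g • n` is `G`-fixed, hence central in `N ⋊ G`, so
`f (inl n) ^ |G| = f (inl (∏ g, g • n)) = 1`.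
As `N = 𝔽_p[G]` has exponent `p` and `p` is prime to `|G|`, `f (inl n) = 1`.
-/

namespace SemidirectProduct

variable {N G B : Type*} [Group G] [CommGroup B]

theorem inl_mem_center_s13 [CommGroup N] {φ : G →* MulAut N} {n : N} (hn : ∀ g, φ g n = n) :
    inl n ∈ Subgroup.center (N ⋊[φ] G) := by
  rw [Subgroup.mem_center_iff]
  intro k
  ext
  · simp [hn, mul_comm]
  · simp

theorem map_inl_aut [Group N] {φ : G →* MulAut N} (f : N ⋊[φ] G →* B) (g : G) (n : N) :
    f (inl (φ g n)) = f (inl n) := by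
  rw [inl_aut, map_mul, map_mul, mul_right_comm, ← map_mul, ← inr.map_mul, mul_inv_cancel,
    map_one, map_one, one_mul]

theorem aut_prod_aut_eq_prod_aut [CommGroup N] [Fintype G] (φ : G →* MulAut N) (h : G)
    (n : N) : φ h (∏ g, φ g n) = ∏ g, φ g n := by
  rw [map_prod]
  exact Fintype.prod_equiv (Equiv.mulLeft h) _ _ fun g => by simp

theorem map_inl_pow_card_eq_one [CommGroup N] [Fintype G] {φ : G →* MulAut N}
    (f : N ⋊[φ] G →* B) (hf : Subgroup.center (N ⋊[φ] G) ≤ f.ker) (n : N) :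
    f (inl n) ^ Fintype.card G = 1 :=
  calc f (inl n) ^ Fintype.card G = ∏ g, f (inl (φ g n)) := by simp [map_inl_aut]
    _ = f (inl (∏ g, φ g n)) := (map_prod (f.comp inl) _ _).symm
    _ = 1 := hf (inl_mem_center_s13 (aut_prod_aut_eq_prod_aut φ · n))

theorem eq_comp_rightHom_of_comp_inl_eq_one [Group N] {φ : G →* MulAut N}
    (f : N ⋊[φ] G →* B) (hf : f.comp inl = 1) : f = (f.comp inr).comp rightHom :=
  hom_ext (by rw [hf, MonoidHom.comp_assoc, rightHom_comp_inl, MonoidHom.comp_one])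
    (by rw [MonoidHom.comp_assoc, rightHom_comp_inr, MonoidHom.comp_id])

end SemidirectProduct

theorem pow_char_eq_one {ι R : Type*} [Ring R] (p : ℕ) [CharP R p]
    (x : Multiplicative (ι → R)) : x ^ p = 1 := by
  apply toAdd.injective
  ext
  simp

/-- Suppose `p ∤ |G|`.  If `B` is commutative and
`f : K →* B` kills the center of `K = 𝔽_p[G] ⋊ G`, then `f` kills all of
`N = 𝔽_p[G]`, i.e. `f` factors through the projection `K → G`.  In particular
every abelian quotient of `K/Z(K)` is a quotient of `G`. -/
theorem abelian_quotients_of_group_algebra_semidirect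
    {G : Type*} [Group G] [Fintype G] (p : ℕ) (hp : p.Prime)
    (hpG : ¬ p ∣ Fintype.card G)
    (B : Type*) [CommGroup B]
    (f : (Multiplicative (G → ZMod p) ⋊[regHom G (ZMod p)] G) →* B)
    (hf : Subgroup.center (Multiplicative (G → ZMod p) ⋊[regHom G (ZMod p)] G) ≤ f.ker) :
    (∀ α : G → ZMod p,
      f (⟨ofAdd α, (1 : G)⟩ : Multiplicative (G → ZMod p) ⋊[regHom G (ZMod p)] G) = 1) ∧
    ∃ g : G →* B, f = g.comp SemidirectProduct.rightHom := by
  have hcop : p.Coprime (Fintype.card G) := (Nat.Prime.coprime_iff_not_dvd hp).mpr hpG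
  have hN : ∀ n, f (SemidirectProduct.inl n) = 1 := fun n =>
    (pow_eq_one_iff_of_coprime hcop).mp
      ⟨by rw [← map_pow, ← map_pow, pow_char_eq_one, map_one, map_one],
        SemidirectProduct.map_inl_pow_card_eq_one f hf n⟩
  exact ⟨fun α => hN (ofAdd α),
    f.comp SemidirectProduct.inr,
    SemidirectProduct.eq_comp_rightHom_of_comp_inl_eq_one f (MonoidHom.ext hN)⟩
end

section
/- Let R be a finitely generated free group and S a finite simple group. Then there exists a natural number k such that the quotient R/R(S) is isomorphic to the direct power S^k; in particular, R/R(S) is a finite direct power of S. -/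
/-- `simpleResidual R S` is `R(S)`: the intersection of all normal subgroups
`N` of `R` such that `R/N` is isomorphic to a finite direct power `S^k` of `S`
(equivalently, `N` is the kernel of a surjective homomorphism `R →* S^k`). -/
def simpleResidual (R : Type*) [Group R] (S : Type*) [Group S] : Subgroup R :=
  sInf {N : Subgroup R |
    ∃ (k : ℕ) (f : R →* (Fin k → S)), Function.Surjective f ∧ N = f.ker}

/-!
If `f` maps `R` onto `S^k` and `h` maps `R` onto the simple group `S`, then `h (ker f)` is normal
in `S`, so either `ker f ≤ ker h` or `(h, f)` maps `R` onto `S^(k+1)`. Folding this over the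
finitely many surjections `R → S` of a finitely generated group produces a surjection onto a
power of `S` whose kernel is the intersection of their kernels. That intersection is `R(S)`, since
the kernel of any surjection onto `S^k` is the intersection of the kernels of its coordinates.
-/

open Function

def Fin.consMulEquiv {n : ℕ} (α : Fin (n + 1) → Type*) [∀ i, Mul (α i)] :
    α 0 × (∀ i : Fin n, α i.succ) ≃* ∀ i, α i where
  __ := Fin.consEquiv α
  map_mul' x y := by
    ext i
    cases i using Fin.cases <;> rfl

namespace MonoidHom

variable {R G S : Type*} [Group R] [Group G] [Group S]

theorem ker_le_ker_or_prod_surjective [IsSimpleGroup S] {f : R →* G} {h : R →* S}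
    (hf : Surjective f) (hh : Surjective h) : f.ker ≤ h.ker ∨ Surjective (h.prod f) := by
  rcases (f.normal_ker.map h hh).eq_bot_or_eq_top with hbot | htop
  · exact Or.inl ((Subgroup.map_eq_bot_iff _).mp hbot)
  · refine Or.inr fun ⟨s, g⟩ => ?_
    obtain ⟨r₀, rfl⟩ := hf g
    obtain ⟨r₁, hr₁, hr₁s⟩ : s * (h r₀)⁻¹ ∈ f.ker.map h := htop ▸ Subgroup.mem_top _
    refine ⟨r₁ * r₀, ?_⟩
    simp [hr₁s, f.mem_ker.mp hr₁]

end MonoidHom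

def powerKernels (R : Type*) [Group R] (S : Type*) [Group S] : Set (Subgroup R) :=
  {N | ∃ (k : ℕ) (f : R →* (Fin k → S)), Surjective f ∧ N = f.ker}

section powerKernels

variable {R S : Type*} [Group R] [Group S]

theorem top_mem_powerKernels : (⊤ : Subgroup R) ∈ powerKernels R S :=
  ⟨0, 1, fun _ => ⟨1, Subsingleton.elim _ _⟩, by simp⟩

theorem inf_ker_mem_powerKernels [IsSimpleGroup S] {N : Subgroup R} (hN : N ∈ powerKernels R S)
    {h : R →* S} (hh : Surjective h) : N ⊓ h.ker ∈ powerKernels R S := by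
  obtain ⟨k, f, hf, rfl⟩ := hN
  rcases MonoidHom.ker_le_ker_or_prod_surjective hf hh with hle | hprod
  · exact ⟨k, f, hf, inf_eq_left.mpr hle⟩
  · let e := Fin.consMulEquiv fun _ : Fin (k + 1) => S
    refine ⟨k + 1, (e : _ →* _).comp (h.prod f), e.surjective.comp hprod, ?_⟩
    rw [MonoidHom.ker_mulEquiv_comp, MonoidHom.ker_prod, inf_comm]

theorem biInf_ker_mem_powerKernels [IsSimpleGroup S] {T : Set (R →* S)} (hT : T.Finite)
    (hsurj : ∀ h ∈ T, Surjective h) : ⨅ h ∈ T, h.ker ∈ powerKernels R S := by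
  induction T, hT using Set.Finite.induction_on with
  | empty => simpa using top_mem_powerKernels
  | insert _ _ ih =>
    rw [Set.forall_mem_insert] at hsurj
    rw [iInf_insert, inf_comm]
    exact inf_ker_mem_powerKernels (ih hsurj.2) hsurj.1

theorem biInf_ker_le_of_mem_powerKernels {N : Subgroup R} (hN : N ∈ powerKernels R S) :
    ⨅ h ∈ {h : R →* S | Surjective h}, h.ker ≤ N := by
  obtain ⟨k, f, hf, rfl⟩ := hN
  intro r hr
  simp only [Subgroup.mem_iInf] at hr
  ext i
  exact hr ((Pi.evalMonoidHom _ i).comp f) ((surjective_eval i).comp hf)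

theorem exists_surjective_ker_eq_simpleResidual [IsSimpleGroup S] [Finite (R →* S)] :
    ∃ (k : ℕ) (f : R →* (Fin k → S)), Surjective f ∧ f.ker = simpleResidual R S := by
  obtain ⟨k, f, hf, hker⟩ :=
    biInf_ker_mem_powerKernels (Set.toFinite {h : R →* S | Surjective h}) fun _ => id
  have hleast : IsLeast (powerKernels R S) f.ker :=
    ⟨⟨k, f, hf, rfl⟩, fun _ hN => hker ▸ biInf_ker_le_of_mem_powerKernels hN⟩
  exact ⟨k, f, hf, hleast.isGLB.sInf_eq.symm⟩

end powerKernels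

/-- For a finitely generated free group `R` and a finite
simple group `S`, the quotient `R/R(S)` is a finite direct power of `S`. -/
theorem simpleResidual_quotient_of_free_group
    (ι : Type) [Finite ι] (S : Type) [Group S] [Finite S] [IsSimpleGroup S] :
    ∃ (k : ℕ) (f : FreeGroup ι →* (Fin k → S)),
      Function.Surjective f ∧ MonoidHom.ker f = simpleResidual (FreeGroup ι) S := by
  have : Finite (FreeGroup ι →* S) := .of_equiv _ FreeGroup.lift
  exact exists_surjective_ker_eq_simpleResidual
end

section
/- Let R be a group generated by r elements, let S be a finite simple group, and let k be a natural number such that the direct power S^k can be generated by r elements but S^{k+1} cannot. If K and L are normal subgroups of R such that R/K is isomorphic to S^k and R/L is isomorphic to S^l for some l, then K ≤ L. Consequently, K equals the intersection R(S) of all normal subgroups of R with quotient a finite direct power of S. -/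
theorem ker_le_ker_aux (R : Type) [Group R] (r : ℕ)
    (hR : ∃ T : Finset R, T.card ≤ r ∧ Subgroup.closure (T : Set R) = ⊤)
    (S : Type) [Group S] [Finite S] [IsSimpleGroup S] (k : ℕ)
    (hk1 : ¬ ∃ T : Finset (Fin (k + 1) → S), T.card ≤ r ∧
      Subgroup.closure (T : Set (Fin (k + 1) → S)) = ⊤)
    (f : R →* (Fin k → S)) (hf : Function.Surjective f)
    (l : ℕ) (g : R →* (Fin l → S)) (hg : Function.Surjective g) :
    f.ker ≤ g.ker := by
  intro x hx
  rw [MonoidHom.mem_ker] at hx ⊢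
  funext j
  by_contra hs
  -- the evaluation-at-j composite
  set e : R →* S := (Pi.evalMonoidHom (fun _ => S) j).comp g with he
  have hesurj : Function.Surjective e := by
    intro s
    obtain ⟨x', hx'⟩ := hg (Function.update 1 j s)
    exact ⟨x', by simp [he, Pi.evalMonoidHom, hx']⟩
  -- N = e '' ker f is a normal subgroup of S, nontrivial, hence ⊤
  have hN : (f.ker.map e) = ⊤ := by
    have hnorm : (f.ker.map e).Normal := Subgroup.Normal.map inferInstance e hesurj
    rcases hnorm.eq_bot_or_eq_top with hb | ht
    · exfalso
      have : e x ∈ f.ker.map e := ⟨x, hx, rfl⟩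
      rw [hb, Subgroup.mem_bot] at this
      exact hs (by simpa [he, Pi.evalMonoidHom] using this)
    · exact ht
  have hNall : ∀ s : S, ∃ y, f y = 1 ∧ e y = s := by
    intro s
    have : s ∈ f.ker.map e := hN ▸ Subgroup.mem_top s
    obtain ⟨y, hy, hys⟩ := this
    exact ⟨y, hy, hys⟩
  -- combined hom
  let h : R →* (Fin (k + 1) → S) :=
  { toFun := fun z => Fin.snoc (f z) (e z)
    map_one' := by
      funext i
      induction i using Fin.lastCases <;> simp
    map_mul' := by
      intro a b
      funext i
      induction i using Fin.lastCases <;> simp }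
  have hhsurj : Function.Surjective h := by
    intro v
    obtain ⟨x₁, hx₁⟩ := hf (fun i : Fin k => v i.castSucc)
    obtain ⟨x₂, hx₂f, hx₂e⟩ := hNall ((e x₁)⁻¹ * v (Fin.last k))
    refine ⟨x₁ * x₂, ?_⟩
    funext i
    induction i using Fin.lastCases with
    | last => simp [h, hx₂e]
    | cast i => simp [h, hx₂f, hx₁]
  classical
  -- contradiction with hk1
  obtain ⟨T, hTcard, hTtop⟩ := hR
  refine hk1 ⟨T.image h, le_trans (Finset.card_image_le) hTcard, ?_⟩
  rw [Finset.coe_image, ← MonoidHom.map_closure, hTtop]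
  rw [← MonoidHom.range_eq_map]
  exact MonoidHom.range_eq_top_of_surjective h hhsurj

/-- Let `R` be generated by `r` elements, `S` finite simple,
and `k` such that `S^k` is `r`-generated but `S^{k+1}` is not.  If `K, L ⊴ R`
with `R/K ≅ S^k` and `R/L ≅ S^l`, then `K ≤ L`; consequently
`K = R(S)`. -/
theorem kernel_of_largest_power_is_simpleResidual
    (R : Type) [Group R] (r : ℕ)
    (hR : ∃ T : Finset R, T.card ≤ r ∧ Subgroup.closure (T : Set R) = ⊤)
    (S : Type) [Group S] [Finite S] [IsSimpleGroup S]
    (k : ℕ)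
    (hk : ∃ T : Finset (Fin k → S), T.card ≤ r ∧
      Subgroup.closure (T : Set (Fin k → S)) = ⊤)
    (hk1 : ¬ ∃ T : Finset (Fin (k + 1) → S), T.card ≤ r ∧
      Subgroup.closure (T : Set (Fin (k + 1) → S)) = ⊤)
    (K L : Subgroup R)
    (hK : ∃ f : R →* (Fin k → S), Function.Surjective f ∧ K = f.ker)
    (hL : ∃ (l : ℕ) (f : R →* (Fin l → S)), Function.Surjective f ∧ L = f.ker) :
    K ≤ L ∧ K = simpleResidual R S := by
  obtain ⟨f, hf, rfl⟩ := hK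
  have main : ∀ N : Subgroup R,
      (∃ (l : ℕ) (g : R →* (Fin l → S)), Function.Surjective g ∧ N = g.ker) →
      f.ker ≤ N := by
    rintro N ⟨l, g, hg, rfl⟩
    exact ker_le_ker_aux R r hR S k hk1 f hf l g hg
  refine ⟨main L hL, le_antisymm (le_sInf main) (sInf_le ⟨k, f, hf, rfl⟩)⟩
end

section
/- Let S be a finite simple group and G a finite group. Let A and B be finite sets of the same cardinality, let F_A and F_B be the free groups on A and B, and let φ : F_A → G and ψ : F_B → G be surjective homomorphisms with kernels R = ker φ and T = ker ψ. Then the quotients F_A/R(S) and F_B/T(S) are isomorphic as groups. (Thus, as a mere group, the universal S-extension G^{A,S} = F_A/R(S) depends only on G, S and the cardinality |A|, and not on the choice of the generating map.) -/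
/-- For a subgroup `R` of a group `F`, the subgroup `R(S)` of `F`: the
image in `F` of the intersection of all normal subgroups of `R` whose quotient
is a finite direct power of `S`. -/
def relResidual {F : Type*} [Group F] (R : Subgroup F) (S : Type*) [Group S] :
    Subgroup F :=
  Subgroup.map R.subtype (simpleResidual R S)

open Function Subgroup

section SimpleResidual

variable {R : Type*} [Group R] {S : Type*} [Group S]

variable (S) in
def IsPowerKernel (N : Subgroup R) : Prop :=
  ∃ (k : ℕ) (f : R →* (Fin k → S)), Surjective f ∧ N = f.ker

lemma isPowerKernel_ker {ι : Type*} [Finite ι] (f : R →* (ι → S)) (hf : Surjective f) :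
    IsPowerKernel S f.ker := by
  let e := MulEquiv.arrowCongr (Finite.equivFin ι) (MulEquiv.refl S)
  exact ⟨_, e.toMonoidHom.comp f, e.surjective.comp hf, (f.ker_mulEquiv_comp e).symm⟩

lemma isPowerKernel_top : IsPowerKernel S (⊤ : Subgroup R) :=
  ⟨0, 1, fun _ => ⟨1, Subsingleton.elim _ _⟩, MonoidHom.ker_one.symm⟩

/-- If `h` is trivial on `N`, intersecting with `ker h` changes nothing; otherwise `h(N)` is a
nontrivial normal subgroup of `S`, hence all of `S`, and `h` contributes a new coordinate. -/
lemma IsPowerKernel.inf_ker [IsSimpleGroup S] {N : Subgroup R} (hN : IsPowerKernel S N)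
    {h : R →* S} (hh : Surjective h) : IsPowerKernel S (N ⊓ h.ker) := by
  obtain ⟨k, f, hf, rfl⟩ := hN
  rcases ((MonoidHom.normal_ker f).map h hh).eq_bot_or_eq_top with hbot | htop
  · rw [inf_of_le_left ((Subgroup.map_eq_bot_iff _).mp hbot)]
    exact ⟨k, f, hf, rfl⟩
  let f' : R →* (Option (Fin k) → S) :=
    MonoidHom.pi fun o => o.elim h fun i => (Pi.evalMonoidHom _ i).comp f
  have hker : f'.ker = f.ker ⊓ h.ker := by
    ext x
    simp [f', MonoidHom.mem_ker, funext_iff, Option.forall, and_comm]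
  refine hker ▸ isPowerKernel_ker f' fun v => ?_
  obtain ⟨r, hr⟩ := hf (v ∘ some)
  obtain ⟨x, hx, hxr⟩ : v none * (h r)⁻¹ ∈ f.ker.map h := htop ▸ mem_top _
  refine ⟨x * r, funext fun o => ?_⟩
  cases o with
  | none => simp [f', hxr]
  | some i => simp [f', (MonoidHom.mem_ker).mp hx, hr]

lemma isPowerKernel_iInf_ker [IsSimpleGroup S] {ι : Type*} [Finite ι] (h : ι → R →* S)
    (hh : ∀ i, Surjective (h i)) : IsPowerKernel S (⨅ i, (h i).ker) := by
  classical
  have := Fintype.ofFinite ι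
  suffices ∀ s : Finset ι, IsPowerKernel S (⨅ i ∈ s, (h i).ker) by
    simpa using this Finset.univ
  intro s
  induction s using Finset.induction_on with
  | empty => simpa using isPowerKernel_top
  | insert i s _ ih => rw [Finset.iInf_insert, inf_comm]; exact ih.inf_ker (hh i)

lemma finite_monoidHom_of_fg [Group.FG R] [Finite S] : Finite (R →* S) := by
  obtain ⟨T, hT, hfin⟩ := Group.fg_iff.mp (inferInstance : Group.FG R)
  have := hfin.to_subtype
  exact Finite.of_injective (fun f : R →* S => fun t : T => f t) fun f g hfg =>
    MonoidHom.eq_of_eqOn_dense hT fun x hx => congrFun hfg ⟨x, hx⟩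

/-- `R(S)` is the intersection of the kernels of the finitely many surjections `R ↠ S`. -/
lemma isPowerKernel_simpleResidual [Group.FG R] [Finite S] [IsSimpleGroup S] :
    IsPowerKernel S (simpleResidual R S) := by
  have := finite_monoidHom_of_fg (R := R) (S := S)
  let h : {h : R →* S // Surjective h} → R →* S := Subtype.val
  have hK := isPowerKernel_iInf_ker h fun h => h.2
  suffices simpleResidual R S = ⨅ i, (h i).ker from this ▸ hK
  refine le_antisymm (sInf_le hK) (le_sInf ?_)
  rintro N ⟨k, f, hf, rfl⟩ x hx
  ext i
  exact (MonoidHom.mem_ker).mp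
    (mem_iInf.mp hx ⟨(Pi.evalMonoidHom _ i).comp f, (surjective_eval i).comp hf⟩)

lemma MulEquiv.map_mem_simpleResidual {R' : Type*} [Group R'] (e : R ≃* R') {x : R}
    (hx : x ∈ simpleResidual R S) : e x ∈ simpleResidual R' S := by
  rw [simpleResidual, mem_sInf] at hx ⊢
  rintro N ⟨k, f, hf, rfl⟩
  exact hx _ ⟨k, f.comp e, hf.comp e.surjective, rfl⟩

end SimpleResidual

section RelResidual

variable {F : Type*} [Group F] {S : Type*} [Group S]

lemma relResidual_le (R : Subgroup F) : relResidual R S ≤ R :=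
  fun _ ⟨y, _, hy⟩ => hy ▸ y.2

instance relResidual_normal (R : Subgroup F) [R.Normal] : (relResidual R S).Normal where
  conj_mem := by
    rintro _ ⟨y, hy, rfl⟩ g
    exact ⟨MulAut.conjNormal g y, (MulAut.conjNormal g).map_mem_simpleResidual hy, by simp⟩

instance relResidual_finiteIndex [Group.FG F] [Finite S] [IsSimpleGroup S] (R : Subgroup F)
    [R.FiniteIndex] : (relResidual R S).FiniteIndex := by
  obtain ⟨k, σ, -, hσ⟩ := isPowerKernel_simpleResidual (R := R) (S := S)
  have : (simpleResidual R S).FiniteIndex := hσ ▸ inferInstance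
  rw [finiteIndex_iff, relResidual, index_map_subtype]
  exact mul_ne_zero FiniteIndex.index_ne_zero FiniteIndex.index_ne_zero

lemma relResidual_le_ker_of_map_mulEquiv {Q : Type*} [Group Q] (T : Subgroup F) (g : F →* Q)
    {k : ℕ} (e : T.map g ≃* (Fin k → S)) : relResidual T S ≤ g.ker := by
  rw [relResidual, map_le_iff_le_comap]
  refine sInf_le ⟨k, e.toMonoidHom.comp (g.subgroupMap T),
    e.surjective.comp (g.subgroupMap_surjective T), ?_⟩
  ext x
  simp [MonoidHom.mem_ker, mem_subgroupOf, Subtype.ext_iff]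

lemma exists_map_mk_relResidual_mulEquiv [Finite S] [IsSimpleGroup S] (R : Subgroup F)
    [R.Normal] [Group.FG R] :
    ∃ k : ℕ, Nonempty (R.map (QuotientGroup.mk' (relResidual R S)) ≃* (Fin k → S)) := by
  obtain ⟨k, σ, hσ, hker⟩ := isPowerKernel_simpleResidual (R := R) (S := S)
  let p := (QuotientGroup.mk' (relResidual R S)).comp R.subtype
  have hp : p.ker = σ.ker := by
    rw [← MonoidHom.comap_ker, QuotientGroup.ker_mk', relResidual,
      comap_map_eq_self_of_injective R.subtype_injective, hker]
  have hrange : p.range = R.map (QuotientGroup.mk' (relResidual R S)) := by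
    rw [MonoidHom.range_comp, range_subtype]
  exact ⟨k, ⟨(MulEquiv.subgroupCongr hrange).symm.trans <|
    (QuotientGroup.quotientKerEquivRange p).symm.trans <|
      (QuotientGroup.quotientMulEquivOfEq hp).trans
        (QuotientGroup.quotientKerEquivOfSurjective σ hσ)⟩⟩

lemma map_ker_comp_of_surjective {P Q G : Type*} [Group P] [Group Q] [Group G] (ε : Q →* G)
    {g : P →* Q} (hg : Surjective g) : (ε.comp g).ker.map g = ε.ker := by
  rw [← MonoidHom.comap_ker, map_comap_eq_self_of_surjective hg]

/-- A surjection `g` lifting `ψ` maps `T = ker ψ` onto `R / R(S) ≅ Sᵏ`. -/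
lemma relResidual_le_ker_of_lift_comp_eq {F' G : Type*} [Group F'] [Group G] [Group.FG F]
    [Finite G] [Finite S] [IsSimpleGroup S] (φ : F →* G) (ψ : F' →* G)
    {g : F' →* F ⧸ relResidual φ.ker S} (hg : Surjective g)
    (hψ : (QuotientGroup.lift _ φ (relResidual_le (S := S) φ.ker)).comp g = ψ) :
    relResidual ψ.ker S ≤ g.ker := by
  set ε := QuotientGroup.lift _ φ (relResidual_le (S := S) φ.ker)
  have hT : ψ.ker.map g = ε.ker := hψ ▸ map_ker_comp_of_surjective ε hg
  have hR := map_ker_comp_of_surjective ε (QuotientGroup.mk'_surjective (relResidual φ.ker S))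
  rw [QuotientGroup.lift_comp_mk'] at hR
  obtain ⟨k, ⟨e⟩⟩ := exists_map_mk_relResidual_mulEquiv (S := S) φ.ker
  exact relResidual_le_ker_of_map_mulEquiv ψ.ker g
    ((MulEquiv.subgroupCongr (hT.trans hR.symm)).trans e)

end RelResidual

lemma closure_range_comp_eq_top {M N ι : Type*} [Group M] [Group N] {f : M →* N}
    (hf : Surjective f) {q : ι → M} (hq : closure (Set.range q) = ⊤) :
    closure (Set.range (f ∘ q)) = ⊤ := by
  rw [Set.range_comp, ← MonoidHom.map_closure, hq, ← MonoidHom.range_eq_map,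
    MonoidHom.range_eq_top.mpr hf]

section Gaschutz

open scoped Classical

variable {Q G B : Type*} [Group Q] [Group G] [Fintype Q] [Fintype B] (π : Q →* G)

noncomputable def liftsIn (H : Subgroup Q) (g : B → G) : Finset (B → Q) :=
  {q | (∀ b, q b ∈ H) ∧ π ∘ q = g}

noncomputable def generatingLifts (H : Subgroup Q) (g : B → G) : Finset (B → Q) :=
  {q | closure (Set.range q) = H ∧ π ∘ q = g}

/-- Multiplying by `l' * l⁻¹`, for pointwise lifts `l` of `g` and `l'` of `g'` in `H`, is a
bijection between the lifts. -/
lemma card_liftsIn_eq (H : Subgroup Q) {g g' : B → G} (hg : ∀ b, g b ∈ H.map π)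
    (hg' : ∀ b, g' b ∈ H.map π) : (liftsIn π H g).card = (liftsIn π H g').card := by
  choose l hlH hl using hg
  choose l' hl'H hl' using hg'
  have hu : ∀ b, (l' * l⁻¹) b ∈ H := fun b => H.mul_mem (hl'H b) (H.inv_mem (hlH b))
  refine Finset.card_nbij' ((l' * l⁻¹) * ·) ((l' * l⁻¹)⁻¹ * ·) ?_ ?_
    (fun q _ => inv_mul_cancel_left _ q) (fun q _ => mul_inv_cancel_left _ q)
  · intro q hq
    simp only [liftsIn, Finset.mem_coe, Finset.mem_filter, Finset.mem_univ, true_and] at hq ⊢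
    refine ⟨fun b => H.mul_mem (hu b) (hq.1 b), funext fun b => ?_⟩
    simp [← congrFun hq.2 b, hl, hl']
  · intro q hq
    simp only [liftsIn, Finset.mem_coe, Finset.mem_filter, Finset.mem_univ, true_and] at hq ⊢
    refine ⟨fun b => H.mul_mem (H.inv_mem (hu b)) (hq.1 b), funext fun b => ?_⟩
    simp [← congrFun hq.2 b, hl, hl']

lemma card_liftsIn_eq_sum (H : Subgroup Q) (g : B → G) :
    (liftsIn π H g).card = ∑ K ∈ {K : Subgroup Q | K ≤ H}, (generatingLifts π K g).card := by
  rw [Finset.card_eq_sum_card_fiberwise (t := {K | K ≤ H})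
    (f := fun q : B → Q => Subgroup.closure (Set.range q))]
  · refine Finset.sum_congr rfl fun K hK => congrArg Finset.card ?_
    simp only [Finset.mem_filter, Finset.mem_univ, true_and] at hK
    ext q
    simp only [liftsIn, generatingLifts, Finset.mem_filter, Finset.mem_univ, true_and]
    constructor
    · rintro ⟨⟨-, hq⟩, hK⟩
      exact ⟨hK, hq⟩
    · rintro ⟨hK', hq⟩
      exact ⟨⟨fun b => hK (hK' ▸ subset_closure (Set.mem_range_self b)), hq⟩, hK'⟩
  · intro q hq
    simp only [liftsIn, Finset.mem_coe, Finset.mem_filter, Finset.mem_univ, true_and] at hq ⊢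
    exact (closure_le H).mpr (Set.range_subset_iff.mpr hq.1)

lemma generatingLifts_eq_empty {K : Subgroup Q} {g : B → G}
    (hg : closure (Set.range g) = ⊤) (hK : K.map π ≠ ⊤) : generatingLifts π K g = ∅ := by
  refine Finset.eq_empty_of_forall_notMem fun q hq => hK ?_
  simp only [generatingLifts, Finset.mem_filter, Finset.mem_univ, true_and] at hq
  rw [← hq.1, MonoidHom.map_closure, ← Set.range_comp, hq.2, hg]

/-- Induction on `H`: the lifts lying in `H` are equinumerous, and those generating a proper
subgroup `K` are counted by the induction hypothesis (or are absent if `π K ≠ G`). -/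
lemma card_generatingLifts_eq {g g' : B → G} (hg : closure (Set.range g) = ⊤)
    (hg' : closure (Set.range g') = ⊤) (H : Subgroup Q) (hH : H.map π = ⊤) :
    (generatingLifts π H g).card = (generatingLifts π H g').card := by
  induction H using WellFoundedLT.induction with
  | _ H ih =>
    have hlifts := card_liftsIn_eq π H (fun b => hH ▸ mem_top (g b))
      (fun b => hH ▸ mem_top (g' b))
    have hHmem : H ∈ ({K : Subgroup Q | K ≤ H} : Finset _) := by simp
    rw [card_liftsIn_eq_sum, card_liftsIn_eq_sum, ← Finset.add_sum_erase _ _ hHmem,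
      ← Finset.add_sum_erase _ _ hHmem] at hlifts
    refine Nat.add_right_cancel (hlifts.trans (congrArg _ (Finset.sum_congr rfl fun K hK => ?_)))
    simp only [Finset.mem_erase, Finset.mem_filter, Finset.mem_univ, true_and] at hK
    by_cases hKπ : K.map π = ⊤
    · exact (ih K (lt_of_le_of_ne hK.2 hK.1) hKπ).symm
    · rw [generatingLifts_eq_empty π hg hKπ, generatingLifts_eq_empty π hg' hKπ]

end Gaschutz

/-- Gaschütz's lemma. -/
theorem exists_generating_lift {Q G B : Type*} [Group Q] [Group G] [Finite Q] [Finite B]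
    {π : Q →* G} (hπ : Surjective π) {q₀ : B → Q} (hq₀ : closure (Set.range q₀) = ⊤)
    {g : B → G} (hg : closure (Set.range g) = ⊤) :
    ∃ q : B → Q, closure (Set.range q) = ⊤ ∧ π ∘ q = g := by
  have := Fintype.ofFinite Q
  have := Fintype.ofFinite B
  have hq₀' : q₀ ∈ generatingLifts π ⊤ (π ∘ q₀) := by simp [generatingLifts, hq₀]
  have hcard := card_generatingLifts_eq π hg (closure_range_comp_eq_top hπ hq₀) ⊤
    (by rw [← MonoidHom.range_eq_map, MonoidHom.range_eq_top.mpr hπ])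
  obtain ⟨q, hq⟩ := Finset.card_pos.mp (hcard ▸ Finset.card_pos.mpr ⟨q₀, hq₀'⟩)
  simp only [generatingLifts, Finset.mem_filter, Finset.mem_univ, true_and] at hq
  exact ⟨q, hq⟩

lemma exists_surjective_lift_freeGroup {Q G B : Type*} [Group Q] [Group G] [Finite Q] [Finite B]
    {π : Q →* G} (hπ : Surjective π) {f : FreeGroup B →* Q} (hf : Surjective f)
    {ψ : FreeGroup B →* G} (hψ : Surjective ψ) :
    ∃ g : FreeGroup B →* Q, Surjective g ∧ π.comp g = ψ := by
  obtain ⟨q, hq, hπq⟩ := exists_generating_lift hπ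
    (closure_range_comp_eq_top hf (FreeGroup.closure_range_of B))
    (closure_range_comp_eq_top hψ (FreeGroup.closure_range_of B))
  refine ⟨FreeGroup.lift q, ?_, FreeGroup.ext_hom _ _ fun b => by simpa using congrFun hπq b⟩
  rw [← MonoidHom.range_eq_top, FreeGroup.range_lift_eq_closure, hq]

lemma exists_surjective_relResidual_le_ker (S : Type*) [Group S] [Finite S] [IsSimpleGroup S]
    {A B G : Type*} [Group G] [Finite A] [Finite B] [Finite G] (e : A ≃ B)
    {φ : FreeGroup A →* G} (hφ : Surjective φ) {ψ : FreeGroup B →* G} (hψ : Surjective ψ) :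
    ∃ g : FreeGroup B →* FreeGroup A ⧸ relResidual φ.ker S,
      Surjective g ∧ relResidual ψ.ker S ≤ g.ker := by
  let D := relResidual φ.ker S
  obtain ⟨g, hg, hgψ⟩ := exists_surjective_lift_freeGroup
    (QuotientGroup.lift_surjective_of_surjective D φ hφ (relResidual_le φ.ker))
    (f := (QuotientGroup.mk' D).comp (FreeGroup.freeGroupCongr e.symm).toMonoidHom)
    ((QuotientGroup.mk'_surjective D).comp (FreeGroup.freeGroupCongr e.symm).surjective) hψ
  exact ⟨g, hg, relResidual_le_ker_of_lift_comp_eq φ ψ hg hgψ⟩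

lemma index_ker_of_surjective {K H : Type*} [Group K] [Group H] {g : K →* H}
    (hg : Surjective g) : g.ker.index = Nat.card H :=
  Nat.card_congr (QuotientGroup.quotientKerEquivOfSurjective g hg).toEquiv

lemma ker_eq_of_le_of_index_le {K H : Type*} [Group K] [Group H] {E : Subgroup K}
    [E.FiniteIndex] {g : K →* H} (hg : Surjective g) (hE : E ≤ g.ker)
    (hindex : E.index ≤ Nat.card H) : g.ker = E :=
  (hE.eq_or_lt.resolve_right fun hlt =>
    (index_strictAnti hlt).not_ge (index_ker_of_surjective hg ▸ hindex)).symm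

/-- As a mere group, the universal `S`-extension
`G^{A,S} = F_A/R(S)` depends only on `G`, `S` and `|A|`: if `|A| = |B|` and
`φ : F_A ↠ G`, `ψ : F_B ↠ G` are surjections with kernels `R`, `T`, then
`F_A/R(S) ≅ F_B/T(S)` (expressed by a common quotient group `C`). -/
theorem universal_S_extension_independent_of_generators
    (S : Type) [Group S] [Finite S] [IsSimpleGroup S]
    (G : Type) [Group G] [Finite G]
    (A B : Type) [Finite A] [Finite B] (hAB : Nonempty (A ≃ B))
    (φ : FreeGroup A →* G) (ψ : FreeGroup B →* G)
    (hφ : Function.Surjective φ) (hψ : Function.Surjective ψ) :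
    ∃ (C : Type) (_ : Group C) (f : FreeGroup A →* C) (g : FreeGroup B →* C),
      Function.Surjective f ∧ Function.Surjective g ∧
      MonoidHom.ker f = relResidual φ.ker S ∧
      MonoidHom.ker g = relResidual ψ.ker S := by
  obtain ⟨e⟩ := hAB
  obtain ⟨g, hg, hTg⟩ := exists_surjective_relResidual_le_ker S e hφ hψ
  obtain ⟨g', hg', hRg'⟩ := exists_surjective_relResidual_le_ker S e.symm hψ hφ
  refine ⟨_, inferInstance, QuotientGroup.mk' _, g, QuotientGroup.mk'_surjective _, hg,
    QuotientGroup.ker_mk' _, ker_eq_of_le_of_index_le hg hTg ?_⟩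
  calc (relResidual ψ.ker S).index = g'.ker.index := (index_ker_of_surjective hg').symm
    _ ≤ (relResidual φ.ker S).index := index_antitone hRg'
end
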